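/- arXiv:math/0610334 — 5 statements merged into one kernel-verified Lean document; each statement's English description precedes it below -/
import Mathlib

section
/- There exists a measurable map C : X × ℕ × ℤ^d → (subsets of ℤ^d) such that for all γ ∈ X, all n ≥ 1 and all x, y, z ∈ ℤ^d: (i) x ∈ C(γ, n, x); (ii) if C(γ, n, x) ∩ C(γ, n, y) ≠ ∅ then C(γ, n, x) = C(γ, n, y); (iii) C(γ, n, x) ⊆ C(γ, n+1, x); (iv) C(θ^z γ, n, θ^z x) = θ^z C(γ, n, x); and such that for ℙ-a.e. γ, every set C(γ, n, x) is finite and ∪_{n ≥ 1} C(γ, n, 0) = ℤ^d. (That is, a locally finite connected clumping rule exists almost surely.) -/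
open MeasureTheory ENNReal

noncomputable section

/-- Sites: the lattice `ℤ^d`. -/
abbrev Site (d : ℕ) := Fin d → ℤ

/-- Configurations: elements of `{0,1}^{ℤ^d}`, encoded with `Bool`. -/
abbrev Config (d : ℕ) := Site d → Bool

/-- The translation `θ^z` acting on configurations: `(θ^z γ)(x) = γ(x - z)`. -/
def shiftCfg {d : ℕ} (z : Site d) (γ : Config d) : Config d := fun x => γ (x - z)

/-- `φ` is a matching on `γ`: an involutive bijection matching ones to zeros. -/
def IsMatching {d : ℕ} (γ : Config d) (φ : Site d → Site d) : Prop :=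
  Function.Bijective φ ∧ (∀ x, φ (φ x) = x) ∧ ∀ x, γ (φ x) = !(γ x)

/-- `Φ` is a matching rule with respect to the measure `P`. -/
def IsMatchingRule {d : ℕ} (P : Measure (Config d)) (Φ : Config d → Site d → Site d) : Prop :=
  (∀ x : Site d, Measurable fun γ => Φ γ x) ∧ ∀ᵐ γ ∂P, IsMatching γ (Φ γ)

/-- `Φ` is translation-equivariant with respect to `P`. -/
def IsEquivariant {d : ℕ} (P : Measure (Config d)) (Φ : Config d → Site d → Site d) : Prop :=
  ∀ z x : Site d, ∀ᵐ γ ∂P, Φ (shiftCfg z γ) (x + z) = Φ γ x + z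

/-- `P` is the product measure with i.i.d. Bernoulli(1/2) coordinates, characterized by
its values on cylinder events. -/
def IsBernoulliHalfProduct {d : ℕ} (P : Measure (Config d)) : Prop :=
  IsProbabilityMeasure P ∧
    ∀ (s : Finset (Site d)) (f : Site d → Bool),
      P {γ | ∀ x ∈ s, γ x = f x} = (1 / 2 : ℝ≥0∞) ^ s.card

/-- `Z_Φ(γ) = ‖Φ(γ, 0)‖`, the `ℓ^∞` distance from the origin to its partner. -/
def ZΦ {d : ℕ} (Φ : Config d → Site d → Site d) (γ : Config d) : ℝ := ‖Φ γ 0‖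

/-- Embedding of the lattice in `ℝ^d`. -/
def toR {d : ℕ} (x : Site d) : Fin d → ℝ := fun i => (x i : ℝ)

/-- The first standard basis vector `e₁`. -/
def e1 (d : ℕ) : Site d := fun i => if (i : ℕ) = 0 then 1 else 0

/-- `x` is a `k`-seed for `γ`. -/
def IsSeed {d : ℕ} (γ : Config d) (k : ℕ) (x : Site d) : Prop :=
  γ x = true ∧ ∀ n : ℕ, 1 ≤ n → n ≤ k - 1 → γ (x + (n : ℤ) • e1 d) = false

/-- `r_k = (2^k k²)^{1/d} + 1/2`. -/
def rr (d k : ℕ) : ℝ := ((2 : ℝ) ^ k * (k : ℝ) ^ 2) ^ ((d : ℝ)⁻¹) + 1 / 2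

/-- The shift `s_k = ⌊100 r_k⌋ e₁`. -/
def ss (d k : ℕ) : Site d := ⌊(100 : ℝ) * rr d k⌋ • e1 d

/-- `W_k(γ)`: the union of all `k`-cutters. -/
def cutters {d : ℕ} (γ : Config d) (k : ℕ) : Set (Fin d → ℝ) :=
  ⋃ x ∈ {x : Site d | IsSeed γ k (x - ss d k)}, {y : Fin d → ℝ | ‖y - toR x‖ = rr d k}

/-- The `k`-blob containing the point `p ∈ ℝ^d`: the connected component of `p` in the
complement of all `j`-cutters with `j > k`. -/
def blob {d : ℕ} (γ : Config d) (k : ℕ) (p : Fin d → ℝ) : Set (Fin d → ℝ) :=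
  connectedComponentIn (⋃ j ∈ {j : ℕ | k < j}, cutters γ j)ᶜ p

/-- The `k`-clump of a site `x`: the lattice points of the `k`-blob containing `x`. -/
def clump {d : ℕ} (γ : Config d) (k : ℕ) (x : Site d) : Set (Site d) :=
  {y : Site d | toR y ∈ blob γ k (toR x)}

/-- The event `E_k`: the cube `S(-s_k, r_k - 1)` contains a `k`-seed. -/
def Ek (d k : ℕ) : Set (Config d) :=
  {γ | ∃ y : Site d, IsSeed γ k y ∧ ‖toR y + toR (ss d k)‖ ≤ rr d k - 1}

/-- A `k`-seed lying in the annulus `S(-s_k, r_k + s) \ S(-s_k, r_k - s)`. -/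
def SeedInAnnulus {d : ℕ} (γ : Config d) (k : ℕ) (s : ℝ) (y : Site d) : Prop :=
  IsSeed γ k y ∧ ‖toR y + toR (ss d k)‖ ≤ rr d k + s ∧ rr d k - s < ‖toR y + toR (ss d k)‖

/-- The event `U_k(s)`: `S(-s_k, r_k + s) \ S(-s_k, r_k - s)` contains a `k`-seed. -/
def Uk (d : ℕ) (k : ℕ) (s : ℝ) : Set (Config d) :=
  {γ | ∃ y : Site d, SeedInAnnulus γ k s y}

/-- The event `C_k(s) = ∪_{j ≥ k} U_j(s)`. -/
def Ck (d : ℕ) (k : ℕ) (s : ℝ) : Set (Config d) :=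
  {γ | ∃ j : ℕ, k ≤ j ∧ γ ∈ Uk d j s}

/-- `±1`-valued spin `2γ(x) - 1`. -/
def pm1 {d : ℕ} (γ : Config d) (y : Site d) : ℤ := if γ y then 1 else -1

/-- `Φ` matches maximally within clumps: a.s. every clump is finite and the number of
sites of each `k`-clump `L` matched outside `L` equals `|Σ_{x ∈ L} (2γ(x) - 1)|`. -/
def MatchesMaximally {d : ℕ} (P : Measure (Config d))
    (Φ : Config d → Site d → Site d) : Prop :=
  ∀ᵐ γ ∂P, ∀ k : ℕ, 1 ≤ k → ∀ x : Site d,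
    (clump γ k x).Finite ∧
      (({y ∈ clump γ k x | Φ γ y ∉ clump γ k x}.ncard : ℤ)
        = |∑ᶠ y ∈ clump γ k x, pm1 γ y|)


/-!
Call `c` a `j`-seed of `γ` if `γ` equals `1` on the stick `c, c + e₁, …, c + (m - 1) e₁`, where
`m = (2d - 1) j`, and call the `ℓ∞`-sphere of radius `R = m 4^j` about it a `j`-shell. At
level `n`, the sites lying on a `j`-shell with `j > n` are walls, and the cluster of `x` is its
class under king moves between non-wall sites (a wall is a cluster of its own). This is a
translation-equivariant partition, and it coarsens as `n` grows since walls only disappear.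

A site lies on some `j`-shell with probability at most `2d (2R + 1)^(d-1) 2^(-m) ≲ j^(d-1) 2^(-j)`,
which is summable, so by Borel–Cantelli each site is almost surely a wall at finitely many levels
only; hence the clusters of `0` exhaust `ℤ^d`. On the other hand, the `4^(jd) = 2^(m + j)`
disjoint sticks based at `x + m u`, `u ∈ [0, 4^j)^d`, all lie within distance `R` of `x`, so by
the second moment method the chance that no `j`-seed is that close to `x` is at most `2^(-j)`.
By Borel–Cantelli again, for every large `j` some `j`-shell surrounds `x`; king moves cannot
cross it, so every cluster is finite.
-/

section General

open Finset

theorem Int.eq_of_mul_add_eq_mul_add {m a b s t : ℤ} (hs : 0 ≤ s) (hsm : s < m) (ht : 0 ≤ t)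
    (htm : t < m) (h : m * a + s = m * b + t) : a = b := by
  rcases lt_trichotomy a b with hab | hab | hab
  · nlinarith
  · exact hab
  · nlinarith

theorem ENNReal.two_mul_le_add_sq (a b : ℝ≥0∞) : 2 * a * b ≤ a ^ 2 + b ^ 2 := by
  rcases eq_or_ne a ∞ with rfl | ha
  · simp [top_pow]
  rcases eq_or_ne b ∞ with rfl | hb
  · simp [top_pow]
  lift a to NNReal using ha
  lift b to NNReal using hb
  exact_mod_cast _root_.two_mul_le_add_sq a b

theorem ENNReal.tsum_add_one_pow_mul_inv_two_pow_ne_top (k : ℕ) :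
    ∑' n : ℕ, ((n : ℝ≥0∞) + 1) ^ k * 2⁻¹ ^ n ≠ ∞ := by
  have hs : Summable fun n : ℕ => ((n : ℝ) + 1) ^ k * 2⁻¹ ^ n := by
    have := ((summable_nat_add_iff 1).2
      (summable_pow_mul_geometric_of_norm_lt_one k (r := (2⁻¹ : ℝ)) (by norm_num))).mul_left 2
    refine this.congr fun n => ?_
    push_cast
    ring
  convert hs.tsum_ofReal_ne_top using 3 with n
  rw [ENNReal.ofReal_mul (by positivity), ENNReal.ofReal_pow (by positivity),
    ENNReal.ofReal_pow (by norm_num), ENNReal.ofReal_add (by positivity) zero_le_one,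
    ENNReal.ofReal_natCast, ENNReal.ofReal_one, ENNReal.ofReal_inv_of_pos two_pos,
    ENNReal.ofReal_ofNat]

theorem lintegral_sum_indicator_sq {α ι : Type*} [MeasurableSpace α] (μ : Measure α)
    (I : Finset ι) {A : ι → Set α} (hA : ∀ i, MeasurableSet (A i)) :
    ∫⁻ a, (∑ i ∈ I, (A i).indicator 1 a) ^ 2 ∂μ =
      ∑ i ∈ I, ∑ k ∈ I, μ (A i ∩ A k) := by
  have hAA (i k : ι) : Measurable ((A i ∩ A k).indicator (1 : α → ℝ≥0∞)) :=
    measurable_one.indicator ((hA i).inter (hA k))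
  have h_sq (a : α) : (∑ i ∈ I, (A i).indicator 1 a) ^ 2 =
      ∑ i ∈ I, ∑ k ∈ I, (A i ∩ A k).indicator (1 : α → ℝ≥0∞) a := by
    simp only [sq, sum_mul_sum, Set.inter_indicator_one, Pi.mul_apply]
  simp_rw [h_sq]
  rw [lintegral_finsetSum _ fun i _ => Finset.measurable_sum _ fun k _ => hAA i k]
  refine sum_congr rfl fun i _ => ?_
  rw [lintegral_finsetSum _ fun k _ => hAA i k]
  exact sum_congr rfl fun k _ => lintegral_indicator_one ((hA i).inter (hA k))

/-- Optimised over `t`, this is the Chung–Erdős inequality. -/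
theorem two_mul_mul_sum_measure_le {α ι : Type*} [MeasurableSpace α] (μ : Measure α)
    (I : Finset ι) {A : ι → Set α} (hA : ∀ i, MeasurableSet (A i)) (t : ℝ≥0∞) :
    2 * t * ∑ i ∈ I, μ (A i) ≤
      t ^ 2 * μ (⋃ i ∈ I, A i) + ∑ i ∈ I, ∑ k ∈ I, μ (A i ∩ A k) := by
  set U := ⋃ i ∈ I, A i
  let S a := ∑ i ∈ I, (A i).indicator (1 : α → ℝ≥0∞) a
  have hU : MeasurableSet U := I.measurableSet_biUnion fun i _ => hA i
  -- AM-GM on `U`; off `U`, `S` vanishes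
  have h_amgm (a : α) : 2 * t * S a ≤ t ^ 2 * U.indicator 1 a + S a ^ 2 := by
    by_cases ha : a ∈ U
    · simpa [Set.indicator_of_mem ha] using ENNReal.two_mul_le_add_sq t (S a)
    · have : S a = 0 := sum_eq_zero fun i hi =>
        Set.indicator_of_notMem (fun h => ha (Set.mem_biUnion hi h)) _
      simp [this]
  calc 2 * t * ∑ i ∈ I, μ (A i) = ∫⁻ a, 2 * t * S a ∂μ := by
        rw [lintegral_const_mul _ (Finset.measurable_sum _ fun i _ =>
          measurable_one.indicator (hA i)), lintegral_finsetSum _ fun i _ =>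
          measurable_one.indicator (hA i)]
        simp only [lintegral_indicator_one (hA _)]
    _ ≤ ∫⁻ a, t ^ 2 * U.indicator 1 a + S a ^ 2 ∂μ := lintegral_mono h_amgm
    _ = _ := by
        rw [lintegral_add_left ((measurable_one.indicator hU).const_mul _),
          lintegral_const_mul _ (measurable_one.indicator hU), lintegral_indicator_one hU,
          lintegral_sum_indicator_sq μ I hA]

theorem measure_compl_biUnion_le_inv {α ι : Type*} [MeasurableSpace α] {μ : Measure α}
    [IsProbabilityMeasure μ] (I : Finset ι) {A : ι → Set α}
    (hA : ∀ i, MeasurableSet (A i)) {p : ℝ≥0∞} (hp : ∀ i ∈ I, μ (A i) = p)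
    (hpair : ∀ i ∈ I, ∀ k ∈ I, i ≠ k → μ (A i ∩ A k) ≤ p ^ 2) :
    μ (⋃ i ∈ I, A i)ᶜ ≤ (#I * p)⁻¹ := by
  classical
  set U := ⋃ i ∈ I, A i
  set T : ℝ≥0∞ := #I * p
  have hT : ∑ i ∈ I, μ (A i) = T := by rw [sum_congr rfl hp, sum_const, nsmul_eq_mul]
  have h_row (i) (hi : i ∈ I) : ∑ k ∈ I, μ (A i ∩ A k) ≤ p + #I * p ^ 2 := calc
    ∑ k ∈ I, μ (A i ∩ A k) ≤ ∑ k ∈ I, ((if i = k then p else 0) + p ^ 2) := by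
      refine sum_le_sum fun k hk => ?_
      by_cases hik : i = k
      · simp [hik, hp k hk]
      · simpa [hik] using hpair i hi k hk hik
    _ = p + #I * p ^ 2 := by
      rw [sum_add_distrib, sum_ite_eq, if_pos hi, sum_const, nsmul_eq_mul]
  have h_second : 2 * T * T ≤ T ^ 2 * μ U + (T + T ^ 2) := calc
    2 * T * T = 2 * T * ∑ i ∈ I, μ (A i) := by rw [hT]
    _ ≤ T ^ 2 * μ U + ∑ i ∈ I, ∑ k ∈ I, μ (A i ∩ A k) :=
      two_mul_mul_sum_measure_le μ I hA T
    _ ≤ T ^ 2 * μ U + ∑ i ∈ I, (p + #I * p ^ 2) := by gcongr with i hi; exact h_row i hi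
    _ = T ^ 2 * μ U + (T + T ^ 2) := by rw [sum_const, nsmul_eq_mul]; ring
  have hT_ne_top : T ≠ ∞ := hT ▸ ENNReal.sum_ne_top.2 fun i _ => measure_ne_top μ _
  have h_total : μ U + μ Uᶜ = 1 := by
    rw [measure_add_measure_compl (I.measurableSet_biUnion fun i _ => hA i), measure_univ]
  rw [ENNReal.le_inv_iff_mul_le]
  clear_value T U
  lift T to NNReal using hT_ne_top with t
  lift μ U to NNReal using measure_ne_top μ U with u
  lift μ Uᶜ to NNReal using measure_ne_top μ Uᶜ with q
  have h_total' : (u : ℝ) + q = 1 := by exact_mod_cast h_total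
  have h_second' : 2 * (t : ℝ) * t ≤ t ^ 2 * u + (t + t ^ 2) := by exact_mod_cast h_second
  suffices (q : ℝ) * t ≤ 1 by exact_mod_cast this
  rcases t.coe_nonneg.eq_or_lt with ht | ht
  · simp [← ht]
  · nlinarith

theorem measurable_reflTransGen {Ω α : Type*} [MeasurableSpace Ω] [Countable α]
    {r : Ω → α → α → Prop} (hr : ∀ a b, Measurable fun ω => r ω a b) (x y : α) :
    Measurable fun ω => Relation.ReflTransGen (r ω) x y := by
  have h_chain (l : List α) : ∀ a, Measurable fun ω => List.IsChain (r ω) (a :: l) := by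
    induction l with
    | nil => simp only [List.isChain_singleton]; exact fun _ => measurable_const
    | cons b l ih => simpa only [List.isChain_cons_cons] using fun a => (hr a b).and (ih b)
  have h_paths : (fun ω => Relation.ReflTransGen (r ω) x y) = fun ω =>
      ∃ l, List.IsChain (r ω) (x :: l) ∧ (x :: l).getLast (List.cons_ne_nil x l) = y := by
    ext ω
    exact ⟨List.exists_isChain_cons_of_relationReflTransGen,
      fun ⟨l, hl, hy⟩ => List.relationReflTransGen_of_exists_isChain_cons l hl hy⟩
  rw [h_paths]
  exact Measurable.exists fun l => (h_chain l x).and measurable_const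

end General

namespace Clumping

open Finset Filter

variable {d : ℕ}

def supDist (x y : Site d) : ℕ := univ.sup fun i => (x i - y i).natAbs

theorem supDist_le_iff {x y : Site d} {r : ℕ} :
    supDist x y ≤ r ↔ ∀ i, (x i - y i).natAbs ≤ r := by
  simp [supDist]

theorem natAbs_sub_le_supDist (x y : Site d) (i : Fin d) : (x i - y i).natAbs ≤ supDist x y :=
  supDist_le_iff.1 le_rfl i

theorem exists_natAbs_sub_eq_supDist (hd : 1 ≤ d) (x y : Site d) :
    ∃ i, (x i - y i).natAbs = supDist x y := by
  have : Nonempty (Fin d) := ⟨⟨0, hd⟩⟩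
  obtain ⟨i, -, hi⟩ := exists_mem_eq_sup univ univ_nonempty fun i => (x i - y i).natAbs
  exact ⟨i, hi.symm⟩

theorem supDist_comm (x y : Site d) : supDist x y = supDist y x := by
  simp only [supDist, ← Int.natAbs_neg (x _ - y _), neg_sub]

theorem supDist_add_right (x y z : Site d) : supDist (x + z) (y + z) = supDist x y := by
  simp [supDist]

theorem eq_of_supDist_eq_zero {x y : Site d} (h : supDist x y = 0) : x = y :=
  funext fun i => by have := natAbs_sub_le_supDist x y i; omega

theorem finite_setOf_supDist_le (c : Site d) (r : ℕ) : {y | supDist y c ≤ r}.Finite :=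
  (Set.finite_Icc (c - fun _ => (r : ℤ)) (c + fun _ => (r : ℤ))).subset fun y hy =>
    ⟨fun i => by have := supDist_le_iff.1 hy i; simp; omega,
      fun i => by have := supDist_le_iff.1 hy i; simp; omega⟩

/-- The witness clamps `x` into the cube of radius `k` about `y`. -/
theorem exists_supDist_le_one_of_supDist_le_succ {x y : Site d} {k : ℕ}
    (h : supDist x y ≤ k + 1) : ∃ x', supDist x x' ≤ 1 ∧ supDist x' y ≤ k := by
  refine ⟨fun i => max (y i - k) (min (x i) (y i + k)), supDist_le_iff.2 fun i => ?_,
    supDist_le_iff.2 fun i => ?_⟩ <;>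
  · have := supDist_le_iff.1 h i
    omega

def seedLength (d j : ℕ) : ℕ := (2 * d - 1) * j

def shellRadius (d j : ℕ) : ℕ := seedLength d j * 4 ^ j

def SeedAt (γ : Config d) (j : ℕ) (c : Site d) : Prop :=
  ∀ i < seedLength d j, γ (c + (i : ℤ) • e1 d) = true

def OnShell (γ : Config d) (j : ℕ) (z : Site d) : Prop :=
  ∃ c, SeedAt γ j c ∧ supDist z c = shellRadius d j

def IsWall (γ : Config d) (n : ℕ) (z : Site d) : Prop :=
  ∃ j, n < j ∧ OnShell γ j z

def Adj (γ : Config d) (n : ℕ) (a b : Site d) : Prop :=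
  supDist a b ≤ 1 ∧ ¬IsWall γ n a ∧ ¬IsWall γ n b

def cluster (γ : Config d) (n : ℕ) (x : Site d) : Set (Site d) :=
  {y | Relation.ReflTransGen (Adj γ n) x y}

theorem seedLength_pos (hd : 1 ≤ d) {j : ℕ} (hj : 1 ≤ j) : 0 < seedLength d j :=
  Nat.mul_pos (by omega) hj

theorem seedLength_eq (hd : 1 ≤ d) (j : ℕ) : seedLength d j = 2 * ((d - 1) * j) + j := by
  obtain ⟨e, rfl⟩ : ∃ e, d = e + 1 := ⟨d - 1, by omega⟩
  rw [seedLength, show 2 * (e + 1) - 1 = 2 * e + 1 by omega, Nat.add_sub_cancel]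
  ring

theorem four_pow_pow_eq (hd : 1 ≤ d) (j : ℕ) : (4 ^ j) ^ d = 2 ^ (seedLength d j + j) := by
  rw [seedLength, ← Nat.succ_mul, Nat.succ_eq_add_one, Nat.sub_add_cancel (by omega),
    show 4 = 2 ^ 2 by rfl, ← pow_mul, ← pow_mul]
  ring_nf

theorem two_mul_shellRadius_add_one_le (hd : 1 ≤ d) (j : ℕ) :
    2 * shellRadius d j + 1 ≤ 3 * (2 * d - 1) * (j + 1) * 4 ^ j := by
  have hQ : 0 < (2 * d - 1) * (j + 1) * 4 ^ j :=
    Nat.mul_pos (Nat.mul_pos (by omega) j.succ_pos) (by positivity)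
  have hR : shellRadius d j ≤ (2 * d - 1) * (j + 1) * 4 ^ j := by
    unfold shellRadius seedLength
    gcongr
    omega
  calc 2 * shellRadius d j + 1 ≤ 3 * ((2 * d - 1) * (j + 1) * 4 ^ j) := by omega
    _ = 3 * (2 * d - 1) * (j + 1) * 4 ^ j := by ring

section Equivariance

variable (z : Site d) (γ : Config d)

theorem seedAt_shiftCfg (j : ℕ) (c : Site d) :
    SeedAt (shiftCfg z γ) j (c + z) ↔ SeedAt γ j c := by
  refine forall₂_congr fun i _ => ?_
  rw [shiftCfg, add_right_comm, add_sub_cancel_right]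

theorem onShell_shiftCfg (j : ℕ) (a : Site d) :
    OnShell (shiftCfg z γ) j (a + z) ↔ OnShell γ j a := by
  rw [OnShell, ← (Equiv.addRight z).exists_congr_right]
  simp only [Equiv.coe_addRight, seedAt_shiftCfg, supDist_add_right, OnShell]

theorem isWall_shiftCfg (n : ℕ) (a : Site d) :
    IsWall (shiftCfg z γ) n (a + z) ↔ IsWall γ n a := by
  simp only [IsWall, onShell_shiftCfg]

theorem adj_shiftCfg (n : ℕ) (a b : Site d) :
    Adj (shiftCfg z γ) n (a + z) (b + z) ↔ Adj γ n a b := by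
  simp only [Adj, isWall_shiftCfg, supDist_add_right]

theorem cluster_shiftCfg (n : ℕ) (x : Site d) :
    cluster (shiftCfg z γ) n (x + z) = (· + z) '' cluster γ n x := by
  have key (a b : Site d) : Relation.ReflTransGen (Adj (shiftCfg z γ) n) (a + z) (b + z) ↔
      Relation.ReflTransGen (Adj γ n) a b :=
    ⟨fun h => by
      simpa [Function.onFun] using Relation.ReflTransGen.lift (· - z)
        (fun u v huv => (adj_shiftCfg z γ n _ _).1 (by simpa using huv)) _ _ h,
     Relation.ReflTransGen.lift (· + z) (fun u v huv => (adj_shiftCfg z γ n u v).2 huv) a b⟩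
  ext y
  simp only [Set.image_add_right, Set.mem_preimage, cluster, Set.mem_ofPred_eq]
  rw [← key, neg_add_cancel_right]

end Equivariance

theorem self_mem_cluster (γ : Config d) (n : ℕ) (x : Site d) : x ∈ cluster γ n x :=
  Relation.ReflTransGen.refl

instance (γ : Config d) (n : ℕ) : Std.Symm (Adj γ n) :=
  ⟨fun a b ⟨hab, ha, hb⟩ => ⟨supDist_comm a b ▸ hab, hb, ha⟩⟩

theorem cluster_eq_of_nonempty_inter {γ : Config d} {n : ℕ} {x y : Site d}
    (h : (cluster γ n x ∩ cluster γ n y).Nonempty) : cluster γ n x = cluster γ n y := by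
  obtain ⟨w, hxw, hyw⟩ := h
  have hxy : Relation.ReflTransGen (Adj γ n) x y := hxw.trans (Std.Symm.symm _ _ hyw)
  ext u
  exact ⟨(Std.Symm.symm _ _ hxy).trans, hxy.trans⟩

theorem cluster_subset_cluster_succ (γ : Config d) (n : ℕ) (x : Site d) :
    cluster γ n x ⊆ cluster γ (n + 1) x :=
  Relation.ReflTransGen.mono (fun _ _ ⟨hab, ha, hb⟩ =>
    ⟨hab, fun ⟨j, hj, h⟩ => ha ⟨j, by omega, h⟩, fun ⟨j, hj, h⟩ => hb ⟨j, by omega, h⟩⟩) x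

theorem measurableSet_seedAt (j : ℕ) (c : Site d) :
    MeasurableSet {γ : Config d | SeedAt γ j c} :=
  measurableSet_setOfPred.2 (by unfold SeedAt; fun_prop)

theorem measurable_isWall (n : ℕ) (z : Site d) :
    Measurable fun γ : Config d => IsWall γ n z := by
  unfold IsWall OnShell SeedAt
  fun_prop

theorem measurableSet_mem_cluster (n : ℕ) (x y : Site d) :
    MeasurableSet {γ : Config d | y ∈ cluster γ n x} :=
  measurableSet_setOfPred.2 <| measurable_reflTransGen (r := fun γ => Adj γ n)
    (fun a b => measurable_const.and ((measurable_isWall n a).not.and (measurable_isWall n b).not))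
    x y

def seedBlock (d j : ℕ) (c : Site d) : Finset (Site d) :=
  (range (seedLength d j)).image fun i : ℕ => c + (i : ℤ) • e1 d

theorem card_seedBlock (hd : 1 ≤ d) (j : ℕ) (c : Site d) :
    #(seedBlock d j c) = seedLength d j := by
  refine (card_image_of_injective _ fun i i' h => ?_).trans (card_range _)
  simpa [e1] using congrFun h ⟨0, hd⟩

theorem seedAt_iff_forall_mem_seedBlock {γ : Config d} {j : ℕ} {c : Site d} :
    SeedAt γ j c ↔ ∀ y ∈ seedBlock d j c, γ y = true := by
  simp [SeedAt, seedBlock]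

theorem measure_seedAt {P : Measure (Config d)} (hP : IsBernoulliHalfProduct P) (hd : 1 ≤ d)
    (j : ℕ) (c : Site d) : P {γ | SeedAt γ j c} = (1 / 2) ^ seedLength d j := by
  simp_rw [seedAt_iff_forall_mem_seedBlock]
  rw [hP.2 _ fun _ => true, card_seedBlock hd]

theorem measure_seedAt_inter_seedAt {P : Measure (Config d)} (hP : IsBernoulliHalfProduct P)
    (hd : 1 ≤ d) {j : ℕ} {c c' : Site d} (h : Disjoint (seedBlock d j c) (seedBlock d j c')) :
    P ({γ | SeedAt γ j c} ∩ {γ | SeedAt γ j c'}) = ((1 / 2) ^ seedLength d j) ^ 2 := by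
  have : {γ | SeedAt γ j c} ∩ {γ | SeedAt γ j c'} =
      {γ | ∀ y ∈ seedBlock d j c ∪ seedBlock d j c', γ y = true} := by
    ext γ
    simp [seedAt_iff_forall_mem_seedBlock, or_imp, forall_and]
  rw [this, hP.2 _ fun _ => true, card_union_of_disjoint h, card_seedBlock hd, card_seedBlock hd,
    pow_add, sq]

def gridPoint (d j : ℕ) (u : Fin d → ℕ) : Site d := fun i => seedLength d j * (u i : ℤ)

theorem disjoint_seedBlock_gridPoint (hd : 1 ≤ d) {j : ℕ} (hj : 1 ≤ j) (x : Site d)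
    {u u' : Fin d → ℕ} (h : u ≠ u') :
    Disjoint (seedBlock d j (x + gridPoint d j u)) (seedBlock d j (x + gridPoint d j u')) := by
  have hm := seedLength_pos hd hj
  refine disjoint_left.2 fun y hy hy' => h (funext fun k => ?_)
  simp only [seedBlock, mem_image, mem_range] at hy hy'
  obtain ⟨i, hi, rfl⟩ := hy
  obtain ⟨i', hi', heq⟩ := hy'
  have hk := congrFun heq k
  simp only [gridPoint, e1, Pi.add_apply, Pi.smul_apply, smul_eq_mul] at hk
  split_ifs at hk
  · exact_mod_cast Int.eq_of_mul_add_eq_mul_add (m := seedLength d j) (a := u k) (b := u' k)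
      (s := i) (t := i') (by positivity) (by omega) (by positivity) (by omega) (by linarith)
  · exact_mod_cast Int.eq_of_mul_add_eq_mul_add (m := seedLength d j) (a := u k) (b := u' k)
      (s := 0) (t := 0) le_rfl (by omega) le_rfl (by omega) (by linarith)

theorem supDist_add_gridPoint_lt (hd : 1 ≤ d) {j : ℕ} (hj : 1 ≤ j) (x : Site d)
    {u : Fin d → ℕ} (hu : ∀ i, u i < 4 ^ j) :
    supDist x (x + gridPoint d j u) < shellRadius d j := by
  have hm := seedLength_pos hd hj
  calc supDist x (x + gridPoint d j u) ≤ seedLength d j * (4 ^ j - 1) :=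
        supDist_le_iff.2 fun i => by
          simpa [gridPoint, Int.natAbs_mul] using
            Nat.mul_le_mul_left _ (Nat.le_sub_one_of_lt (hu i))
    _ < shellRadius d j := Nat.mul_lt_mul_of_pos_left (Nat.sub_lt (by positivity) one_pos) hm

theorem measure_not_exists_seedAt_lt_le {P : Measure (Config d)}
    (hP : IsBernoulliHalfProduct P) (hd : 1 ≤ d) {j : ℕ} (hj : 1 ≤ j) (x : Site d) :
    P {γ | ¬∃ c, SeedAt γ j c ∧ supDist x c < shellRadius d j} ≤ 2⁻¹ ^ j := by
  have : IsProbabilityMeasure P := hP.1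
  let I := Fintype.piFinset fun _ : Fin d => range (4 ^ j)
  calc P {γ | ¬∃ c, SeedAt γ j c ∧ supDist x c < shellRadius d j}
      ≤ P (⋃ u ∈ I, {γ | SeedAt γ j (x + gridPoint d j u)})ᶜ := by
        refine measure_mono fun γ hγ hU => hγ ?_
        obtain ⟨u, hu, hseed⟩ := Set.mem_iUnion₂.1 hU
        exact ⟨_, hseed, supDist_add_gridPoint_lt hd hj x fun i => by
          simpa using Fintype.mem_piFinset.1 hu i⟩
    _ ≤ ((#I : ℝ≥0∞) * (1 / 2) ^ seedLength d j)⁻¹ :=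
        measure_compl_biUnion_le_inv I (fun _ => measurableSet_seedAt _ _)
          (fun _ _ => measure_seedAt hP hd _ _) fun _ _ _ _ h =>
            (measure_seedAt_inter_seedAt hP hd (disjoint_seedBlock_gridPoint hd hj x h)).le
    _ = 2⁻¹ ^ j := by
        rw [Fintype.card_piFinset_const, card_range, four_pow_pow_eq hd, Nat.cast_pow,
          Nat.cast_ofNat, pow_add, mul_right_comm, ← mul_pow, one_div,
          ENNReal.mul_inv_cancel two_ne_zero ENNReal.ofNat_ne_top, one_pow, one_mul,
          ENNReal.inv_pow]

def sphereOffsets (d r : ℕ) : Finset (Site d) :=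
  univ.biUnion fun i : Fin d => ({(r : ℤ), -(r : ℤ)} : Finset ℤ).biUnion fun a =>
    {v ∈ Fintype.piFinset fun _ => Icc (-r : ℤ) r | v i = a}

theorem card_sphereOffsets_le (d r : ℕ) :
    #(sphereOffsets d r) ≤ 2 * d * (2 * r + 1) ^ (d - 1) := by
  have hIcc : #(Icc (-r : ℤ) r) = 2 * r + 1 := by simp; omega
  calc #(sphereOffsets d r)
      ≤ ∑ i : Fin d, ∑ a ∈ ({(r : ℤ), -(r : ℤ)} : Finset ℤ),
          #{v ∈ Fintype.piFinset fun _ => Icc (-r : ℤ) r | v i = a} :=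
        card_biUnion_le.trans (sum_le_sum fun _ _ => card_biUnion_le)
    _ ≤ ∑ _i : Fin d, ∑ _a ∈ ({(r : ℤ), -(r : ℤ)} : Finset ℤ), (2 * r + 1) ^ (d - 1) := by
        gcongr with i _ a ha
        rw [Fintype.card_filter_piFinset_const_eq_of_mem _ _ (by simp at ha ⊢; omega), hIcc,
          Fintype.card_fin]
    _ ≤ 2 * d * (2 * r + 1) ^ (d - 1) := by
        simp only [sum_const, card_univ, Fintype.card_fin, smul_eq_mul]
        rw [mul_comm 2 d, mul_assoc]
        gcongr
        exact card_le_two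

theorem sub_mem_sphereOffsets (hd : 1 ≤ d) {z c : Site d} :
    c - z ∈ sphereOffsets d (supDist z c) := by
  obtain ⟨i, hi⟩ := exists_natAbs_sub_eq_supDist hd z c
  have hball (k : Fin d) := natAbs_sub_le_supDist z c k
  simp only [sphereOffsets, mem_biUnion, mem_univ, true_and, mem_insert, mem_singleton,
    exists_eq_or_imp, exists_eq_left, mem_filter, Fintype.mem_piFinset, mem_Icc, Pi.sub_apply]
  refine ⟨i, ?_⟩
  rcases Int.natAbs_eq (z i - c i) with h | h
  · exact .inr ⟨fun k => by have := hball k; omega, by omega⟩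
  · exact .inl ⟨fun k => by have := hball k; omega, by omega⟩

theorem measure_onShell_le {P : Measure (Config d)} (hP : IsBernoulliHalfProduct P)
    (hd : 1 ≤ d) (j : ℕ) (z : Site d) :
    P {γ | OnShell γ j z} ≤
      (2 * d * (2 * shellRadius d j + 1) ^ (d - 1) : ℕ) * (1 / 2) ^ seedLength d j :=
  calc P {γ | OnShell γ j z}
      ≤ P (⋃ v ∈ sphereOffsets d (shellRadius d j), {γ | SeedAt γ j (z + v)}) := by
        refine measure_mono fun γ ⟨c, hc, hzc⟩ => Set.mem_iUnion₂.2 ⟨c - z, ?_, ?_⟩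
        · exact hzc ▸ sub_mem_sphereOffsets hd
        · simpa using hc
    _ ≤ ∑ v ∈ sphereOffsets d (shellRadius d j), P {γ | SeedAt γ j (z + v)} :=
        measure_biUnion_finset_le _ _
    _ ≤ _ := by
        rw [sum_congr rfl fun _ _ => measure_seedAt hP hd j _, sum_const, nsmul_eq_mul]
        gcongr
        exact_mod_cast card_sphereOffsets_le d _

theorem measure_onShell_le_pow_mul_geometric {P : Measure (Config d)}
    (hP : IsBernoulliHalfProduct P) (hd : 1 ≤ d) (j : ℕ) (z : Site d) :
    P {γ | OnShell γ j z} ≤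
      (2 * d * (3 * (2 * d - 1)) ^ (d - 1) : ℕ) * (((j : ℝ≥0∞) + 1) ^ (d - 1) * 2⁻¹ ^ j) := by
  have h4 : (4 : ℝ≥0∞) ^ j * ((1 / 2) ^ 2) ^ j = 1 := by
    rw [← mul_pow, one_div, ← ENNReal.inv_pow, show (4 : ℝ≥0∞) = 2 ^ 2 by norm_num,
      ENNReal.mul_inv_cancel (by positivity) (by simp), one_pow]
  calc P {γ | OnShell γ j z}
      ≤ (2 * d * (2 * shellRadius d j + 1) ^ (d - 1) : ℕ) * (1 / 2) ^ seedLength d j :=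
        measure_onShell_le hP hd j z
    _ ≤ (2 * d * (3 * (2 * d - 1) * (j + 1) * 4 ^ j) ^ (d - 1) : ℕ) *
          (1 / 2) ^ seedLength d j := by
        gcongr
        exact two_mul_shellRadius_add_one_le hd j
    _ = _ := by
        rw [seedLength_eq hd, pow_add, pow_mul (1 / 2 : ℝ≥0∞) 2, mul_comm (d - 1) j,
          pow_mul _ j]
        simp only [Nat.cast_mul, Nat.cast_pow, Nat.cast_add, Nat.cast_one, Nat.cast_ofNat]
        generalize ((j : ℝ≥0∞) + 1) = t
        calc _ = (2 * d * (3 * ((2 * d - 1 : ℕ) : ℝ≥0∞)) ^ (d - 1) : ℝ≥0∞) * t ^ (d - 1) *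
              (1 / 2) ^ j * (4 ^ j * ((1 / 2) ^ 2) ^ j) ^ (d - 1) := by ring
          _ = _ := by rw [h4, one_div]; ring

theorem ae_eventually_not_onShell {P : Measure (Config d)} (hP : IsBernoulliHalfProduct P)
    (hd : 1 ≤ d) : ∀ᵐ γ ∂P, ∀ z, ∀ᶠ j in atTop, ¬OnShell γ j z := by
  refine ae_all_iff.2 fun z => ae_eventually_notMem (ne_top_of_le_ne_top ?_
    (ENNReal.tsum_le_tsum (measure_onShell_le_pow_mul_geometric hP hd · z)))
  rw [ENNReal.tsum_mul_left]
  exact ENNReal.mul_ne_top (ENNReal.natCast_ne_top _)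
    (ENNReal.tsum_add_one_pow_mul_inv_two_pow_ne_top _)

theorem ae_eventually_exists_seedAt_lt {P : Measure (Config d)}
    (hP : IsBernoulliHalfProduct P) (hd : 1 ≤ d) :
    ∀ᵐ γ ∂P, ∀ x, ∀ᶠ j in atTop, ∃ c, SeedAt γ j c ∧ supDist x c < shellRadius d j := by
  have : IsProbabilityMeasure P := hP.1
  refine ae_all_iff.2 fun x => ?_
  have h_le (j : ℕ) :
      P {γ | ¬∃ c, SeedAt γ j c ∧ supDist x c < shellRadius d j} ≤ 2⁻¹ ^ j := by
    rcases Nat.eq_zero_or_pos j with rfl | hj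
    · simpa using prob_le_one
    · exact measure_not_exists_seedAt_lt_le hP hd hj x
  have h_sum : ∑' j : ℕ, (2⁻¹ : ℝ≥0∞) ^ j ≠ ∞ := by
    rw [ENNReal.tsum_geometric_two]
    exact ENNReal.ofNat_ne_top
  filter_upwards [ae_eventually_notMem (ne_top_of_le_ne_top h_sum (ENNReal.tsum_le_tsum h_le))]
    with γ hγ
  filter_upwards [hγ] with j hj
  simpa using hj

theorem cluster_subset_of_seedAt {γ : Config d} {n j : ℕ} (hj : n < j) {c x : Site d}
    (hc : SeedAt γ j c) (hx : supDist x c < shellRadius d j) :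
    cluster γ n x ⊆ {y | supDist y c < shellRadius d j} := by
  intro y hy
  induction hy with
  | refl => exact hx
  | @tail a b _ hab ih =>
    replace ih : supDist a c < shellRadius d j := ih
    have hle : supDist b c ≤ shellRadius d j := supDist_le_iff.2 fun i => by
      have := natAbs_sub_le_supDist a b i
      have := natAbs_sub_le_supDist a c i
      have := hab.1
      omega
    exact hle.lt_of_ne fun h => hab.2.2 ⟨j, hj, c, hc, h⟩

theorem finite_cluster {γ : Config d} {x : Site d}
    (hγ : ∀ᶠ j in atTop, ∃ c, SeedAt γ j c ∧ supDist x c < shellRadius d j) (n : ℕ) :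
    (cluster γ n x).Finite := by
  obtain ⟨j, ⟨c, hc, hx⟩, hj⟩ := (hγ.and (eventually_gt_atTop n)).exists
  exact (finite_setOf_supDist_le c _).subset fun y hy =>
    (show supDist y c < _ from cluster_subset_of_seedAt hj hc hx hy).le

theorem reflTransGen_adj_of_forall_not_isWall {γ : Config d} {n : ℕ} {x y : Site d}
    (h : ∀ z, supDist z y ≤ supDist x y → ¬IsWall γ n z) :
    Relation.ReflTransGen (Adj γ n) x y := by
  suffices ∀ k x, supDist x y ≤ k → (∀ z, supDist z y ≤ k → ¬IsWall γ n z) →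
      Relation.ReflTransGen (Adj γ n) x y from this _ x le_rfl h
  intro k
  induction k with
  | zero => exact fun x hx _ => eq_of_supDist_eq_zero (Nat.le_zero.1 hx) ▸ .refl
  | succ k ih =>
    intro x hx hwall
    obtain ⟨x', hxx', hx'y⟩ := exists_supDist_le_one_of_supDist_le_succ hx
    exact .head ⟨hxx', hwall x hx, hwall x' (by omega)⟩
      (ih x' hx'y fun z hz => hwall z (by omega))

theorem eventually_mem_cluster {γ : Config d} (hγ : ∀ z, ∀ᶠ j in atTop, ¬OnShell γ j z)
    (x y : Site d) : ∀ᶠ n in atTop, y ∈ cluster γ n x := by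
  have h_wall (z : Site d) : ∀ᶠ n in atTop, ¬IsWall γ n z := by
    obtain ⟨N, hN⟩ := eventually_atTop.1 (hγ z)
    filter_upwards [eventually_ge_atTop N] with n hn ⟨j, hj, hs⟩ using hN j (by omega) hs
  filter_upwards [(finite_setOf_supDist_le y (supDist x y)).eventually_all.2 fun z _ => h_wall z]
    with n hn
  exact reflTransGen_adj_of_forall_not_isWall hn

end Clumping

/-- A locally finite connected clumping rule exists almost surely. -/
theorem statement3 (d : ℕ) (hd : 1 ≤ d)
    (P : Measure (Config d)) (hP : IsBernoulliHalfProduct P) :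
    ∃ C : Config d → ℕ → Site d → Set (Site d),
      (∀ (n : ℕ) (x y : Site d), MeasurableSet {γ | y ∈ C γ n x}) ∧
      (∀ (γ : Config d) (n : ℕ), 1 ≤ n → ∀ x y z : Site d,
        x ∈ C γ n x ∧
        ((C γ n x ∩ C γ n y).Nonempty → C γ n x = C γ n y) ∧
        C γ n x ⊆ C γ (n + 1) x ∧
        C (shiftCfg z γ) n (x + z) = (· + z) '' C γ n x) ∧
      (∀ᵐ γ ∂P, (∀ (n : ℕ) (x : Site d), 1 ≤ n → (C γ n x).Finite) ∧
        ⋃ n ∈ {n : ℕ | 1 ≤ n}, C γ n 0 = Set.univ) := by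
  refine ⟨Clumping.cluster, Clumping.measurableSet_mem_cluster, fun γ n _ x y z =>
    ⟨Clumping.self_mem_cluster γ n x, Clumping.cluster_eq_of_nonempty_inter,
      Clumping.cluster_subset_cluster_succ γ n x, Clumping.cluster_shiftCfg z γ n x⟩, ?_⟩
  filter_upwards [Clumping.ae_eventually_exists_seedAt_lt hP hd,
    Clumping.ae_eventually_not_onShell hP hd] with γ h_seed h_shell
  refine ⟨fun n x _ => Clumping.finite_cluster (h_seed x) n, Set.eq_univ_of_forall fun y => ?_⟩
  obtain ⟨n, hy, hn⟩ :=
    ((Clumping.eventually_mem_cluster h_shell 0 y).and (Filter.eventually_ge_atTop 1)).exists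
  exact Set.mem_biUnion hn hy
end
end

section
/- There is a constant c₁ = c₁(d) < ∞ such that for every integer k > c₁, ℙ(E_k^c) ≤ e^{−k}; that is, the probability that the cube S(−s_k, r_k − 1) contains no k-seed is at most e^{−k}. -/
open MeasureTheory ENNReal

noncomputable section

/-!
The cube `S(-s_k, r_k - 1)` contains the lattice box `-s_k + [-R, R]^d`, `R = ⌊r_k - 1⌋`, which we
cut into `M = ⌊(2R+1)/k⌋ (2R+1)^(d-1)` disjoint runs of `k` consecutive sites along `e₁`. If there
is no `k`-seed, none of these runs carries the pattern `1 0 ⋯ 0`; there are `(2^k - 1)^M` such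
configurations of the runs, each of probability `2^(-kM)`, so `ℙ(E_kᶜ) ≤ (1 - 2^(-k))^M ≤
exp(-M 2^(-k))`. Finally `r_k^d ≈ 2^k k²` and `k ≪ r_k` for large `k` (as `k^d ≪ 2^k`), which gives
`M ≥ k 2^k`.
-/

open Function Filter

theorem one_sub_pow_le_exp_neg_mul {p : ℝ} (hp : p ≤ 1) (M : ℕ) :
    (1 - p) ^ M ≤ Real.exp (-(M * p)) := by
  rw [neg_mul_eq_mul_neg, Real.exp_nat_mul]
  exact pow_le_pow_left₀ (by linarith) (Real.one_sub_le_exp_neg p) M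

namespace IsBernoulliHalfProduct

variable {d : ℕ} {P : Measure (Config d)} (hP : IsBernoulliHalfProduct P)
include hP

theorem measure_comp_eq {ι : Type*} [Fintype ι] {site : ι → Site d} (hsite : Injective site)
    (h : ι → Bool) :
    P {γ | γ ∘ site = h} = (1 / 2) ^ Fintype.card ι := by
  classical
  have hset : {γ : Config d | γ ∘ site = h} =
      {γ | ∀ x ∈ Finset.univ.image site, γ x = extend site h (fun _ => false) x} := by
    ext γ
    simp only [Set.mem_ofPred, Finset.forall_mem_image, Finset.mem_univ, forall_const,
      hsite.extend_apply, funext_iff, comp_apply]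
  rw [hset, hP.2, Finset.card_image_of_injective _ hsite, Finset.card_univ]

theorem measure_comp_mem_le {ι : Type*} [Fintype ι] {site : ι → Site d} (hsite : Injective site)
    (B : Finset (ι → Bool)) :
    P {γ | γ ∘ site ∈ B} ≤ B.card * (1 / 2) ^ Fintype.card ι := by
  calc P {γ | γ ∘ site ∈ B} = P (⋃ h ∈ B, {γ | γ ∘ site = h}) := by
        congr 1; ext γ; simp
    _ ≤ ∑ h ∈ B, P {γ | γ ∘ site = h} := measure_biUnion_finset_le _ _
    _ = B.card * (1 / 2) ^ Fintype.card ι := by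
        simp [hP.measure_comp_eq hsite]

theorem measure_forall_ne_le {J κ : Type*} [Fintype J] [Fintype κ]
    {site : J × κ → Site d} (hsite : Injective site) (pat : κ → Bool) :
    P {γ | ∀ j, (fun n => γ (site (j, n))) ≠ pat} ≤
      ENNReal.ofReal (Real.exp (-(Fintype.card J / 2 ^ Fintype.card κ))) := by
  classical
  set M := Fintype.card J
  set N := Fintype.card κ
  let B : Finset (J × κ → Bool) :=
    (Fintype.piFinset fun _ : J => ({pat}ᶜ : Finset (κ → Bool))).map
      (Equiv.curry J κ Bool).symm.toEmbedding
  have hB : {γ : Config d | ∀ j, (fun n => γ (site (j, n))) ≠ pat} = {γ | γ ∘ site ∈ B} := by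
    ext γ
    simp only [B, Set.mem_ofPred_eq, Finset.mem_map_equiv, Equiv.symm_symm, Equiv.curry_apply,
      Fintype.mem_piFinset, Finset.mem_compl, Finset.mem_singleton]
    rfl
  have hcard : B.card = (2 ^ N - 1) ^ M := by
    simp [B, Fintype.card_piFinset, Finset.card_compl, N, M]
  have hp : (1 / 2 : ℝ) ^ N ≤ 1 := pow_le_one₀ (by norm_num) (by norm_num)
  have hreal : ((2 ^ N - 1 : ℕ) : ℝ≥0∞) * (1 / 2) ^ N = ENNReal.ofReal (1 - (1 / 2) ^ N) := by
    have h2N : ((2 ^ N - 1 : ℕ) : ℝ) * (1 / 2) ^ N = 1 - (1 / 2) ^ N := by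
      rw [Nat.cast_sub Nat.one_le_two_pow, sub_mul]
      norm_num [← mul_pow]
    rw [← h2N, ENNReal.ofReal_mul (by positivity), ENNReal.ofReal_natCast,
      ENNReal.ofReal_pow (by norm_num), ENNReal.ofReal_div_of_pos two_pos]
    norm_num
  calc P {γ | ∀ j, (fun n => γ (site (j, n))) ≠ pat}
      ≤ B.card * (1 / 2) ^ Fintype.card (J × κ) := hB ▸ hP.measure_comp_mem_le hsite B
    _ = ENNReal.ofReal ((1 - (1 / 2) ^ N) ^ M) := by
        rw [hcard, Fintype.card_prod, mul_comm M N, pow_mul, Nat.cast_pow, ← mul_pow, hreal,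
          ENNReal.ofReal_pow (sub_nonneg.2 hp)]
    _ ≤ ENNReal.ofReal (Real.exp (-(M / 2 ^ N))) := by
        rw [div_eq_mul_one_div (M : ℝ), ← one_div_pow]
        gcongr
        exact one_sub_pow_le_exp_neg_mul hp M

end IsBernoulliHalfProduct

theorem isSeed_of_forall {d k : ℕ} {γ : Config d} {x : Site d} (hk : 0 < k)
    (h : ∀ n : Fin k, γ (x + (n : ℤ) • e1 d) = decide ((n : ℕ) = 0)) : IsSeed γ k x := by
  refine ⟨by simpa using h ⟨0, hk⟩, fun n hn hnk => ?_⟩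
  simpa [show n ≠ 0 by omega] using h ⟨n, by omega⟩

theorem toR_add {d : ℕ} (x y : Site d) : toR (x + y) = toR x + toR y := by
  funext i
  simp [toR]

theorem norm_toR_le {d : ℕ} {x : Site d} {r : ℕ} (h : ∀ i, |x i| ≤ r) : ‖toR x‖ ≤ r := by
  refine (pi_norm_le_iff_of_nonneg (Nat.cast_nonneg r)).2 fun i => ?_
  rw [toR, Real.norm_eq_abs, ← Int.cast_abs]
  exact_mod_cast h i

theorem e1_succ (m : ℕ) : e1 (m + 1) = Fin.cons 1 0 := by
  funext i
  cases i using Fin.cases <;> simp [e1]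

section Slots

variable {m k R A : ℕ}

/-- The `n`-th site of slot `(a, w)` in the box `[-R, R]^(m+1)`: its first coordinate is
`a * k + n - R` (as `finProdFinEquiv (a, n) = n + k * a`), the others are `w - R`. The slots are
disjoint runs of `k` consecutive sites along `e₁` as long as `A * k ≤ 2 * R + 1`. -/
def slotSite (k R : ℕ) (p : (Fin A × (Fin m → Fin (2 * R + 1))) × Fin k) : Site (m + 1) :=
  Fin.cons (((finProdFinEquiv (p.1.1, p.2) : ℕ) : ℤ) - R) fun i => ((p.1.2 i : ℕ) : ℤ) - R

theorem slotSite_injective : Injective (slotSite (A := A) (m := m) k R) := by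
  rintro ⟨⟨a, w⟩, n⟩ ⟨⟨a', w'⟩, n'⟩ h
  obtain ⟨h0, hw⟩ := Fin.cons_inj.1 h
  have han : (a, n) = (a', n') :=
    finProdFinEquiv.injective (Fin.ext (by exact_mod_cast sub_left_injective h0))
  have hw' : w = w' :=
    funext fun i => Fin.ext (by exact_mod_cast sub_left_injective (congrFun hw i))
  simp_all

theorem slotSite_eq_add (j : Fin A × (Fin m → Fin (2 * R + 1))) (n : Fin k) :
    slotSite k R (j, n) = slotSite k R (j, ⟨0, n.pos⟩) + (n : ℤ) • e1 (m + 1) := by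
  funext i
  cases i using Fin.cases
  · simp only [slotSite, e1_succ, Pi.add_apply, Pi.smul_apply, Fin.cons_zero,
      finProdFinEquiv_apply_val]
    push_cast
    ring
  · simp [slotSite, e1_succ]

theorem abs_slotSite_le (hA : A * k ≤ 2 * R + 1) (p : (Fin A × (Fin m → Fin (2 * R + 1))) × Fin k)
    (i : Fin (m + 1)) : |slotSite k R p i| ≤ R := by
  cases i using Fin.cases with
  | zero =>
    have := (finProdFinEquiv (p.1.1, p.2)).isLt
    simp only [slotSite, Fin.cons_zero, abs_le]
    constructor <;> omega
  | succ i =>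
    have := (p.1.2 i).isLt
    simp only [slotSite, Fin.cons_succ, abs_le]
    constructor <;> omega

end Slots

theorem eventually_mul_pow_lt_two_pow (c : ℝ) (d : ℕ) :
    ∀ᶠ k : ℕ in atTop, (c * k) ^ d < 2 ^ k := by
  have h := (tendsto_pow_const_div_const_pow_of_one_lt d one_lt_two).const_mul (c ^ d)
  rw [mul_zero] at h
  filter_upwards [h.eventually_lt_const one_pos] with k hk
  rwa [← mul_div_assoc, ← mul_pow, div_lt_one (by positivity)] at hk

theorem rr_sub_half_pow {d : ℕ} (hd : d ≠ 0) (k : ℕ) : (rr d k - 1 / 2) ^ d = 2 ^ k * k ^ 2 := by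
  rw [rr, add_sub_cancel_right, Real.rpow_inv_natCast_pow (by positivity) hd]

theorem pow_le_mul_div_mul_pow {k x m : ℕ} {t : ℝ} (hk : 0 < k) (ht : 0 ≤ t)
    (hkx : 4 * k ≤ x) (htx : 4 * t ≤ 3 * x) : t ^ (m + 1) ≤ k * (x / k * x ^ m : ℕ) := by
  have hdiv : 3 * x ≤ 4 * (k * (x / k)) := by
    have := Nat.lt_div_mul_add (a := x) hk
    rw [mul_comm k]
    omega
  have hdivR : (3 / 4 : ℝ) * x ≤ k * (x / k : ℕ) := by
    have : ((3 * x : ℕ) : ℝ) ≤ (4 * (k * (x / k)) : ℕ) := by exact_mod_cast hdiv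
    push_cast at this
    linarith
  calc t ^ (m + 1) ≤ ((3 / 4) * x) ^ (m + 1) := by gcongr; linarith
    _ = (3 / 4) ^ (m + 1) * x * x ^ m := by ring
    _ ≤ (3 / 4) * x * x ^ m := by
        gcongr
        exact pow_le_of_le_one (by norm_num) (by norm_num) m.add_one_ne_zero
    _ ≤ k * (x / k : ℕ) * x ^ m := by gcongr
    _ = k * (x / k * x ^ m : ℕ) := by push_cast; ring

theorem compl_Ek_subset {m k R A : ℕ} (hk : 0 < k) (hA : A * k ≤ 2 * R + 1)
    (hR : (R : ℝ) ≤ rr (m + 1) k - 1) :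
    (Ek (m + 1) k)ᶜ ⊆ {γ | ∀ j : Fin A × (Fin m → Fin (2 * R + 1)),
      (fun n : Fin k => γ (slotSite k R (j, n) - ss (m + 1) k)) ≠
        fun n : Fin k => decide ((n : ℕ) = 0)} := by
  intro γ hγ j hj
  refine hγ ⟨slotSite k R (j, ⟨0, hk⟩) - ss (m + 1) k, isSeed_of_forall hk fun n => ?_, ?_⟩
  · rw [sub_add_eq_add_sub, ← slotSite_eq_add]
    exact congrFun hj n
  · rw [← toR_add, sub_add_cancel]
    exact (norm_toR_le (abs_slotSite_le hA _)).trans hR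

theorem mul_le_rr_sub_half {d k : ℕ} (hd : d ≠ 0) (hk : 1 ≤ k) {c : ℝ}
    (hc : (c * k) ^ d ≤ 2 ^ k) :
    c * k ≤ rr d k - 1 / 2 := by
  have ht0 : 0 ≤ rr d k - 1 / 2 := by rw [rr, add_sub_cancel_right]; positivity
  refine le_of_pow_le_pow_left₀ hd ht0 (hc.trans ?_)
  rw [rr_sub_half_pow hd]
  exact le_mul_of_one_le_right (by positivity) (by exact_mod_cast Nat.one_le_pow _ _ hk)

theorem le_card_slots_div {m k : ℕ} (hk : 1 ≤ k) (h3k : 3 * k ≤ rr (m + 1) k - 1 / 2) :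
    (k : ℝ) ≤ ((2 * ⌊rr (m + 1) k - 1⌋₊ + 1) / k * (2 * ⌊rr (m + 1) k - 1⌋₊ + 1) ^ m : ℕ) /
      2 ^ k := by
  set t := rr (m + 1) k - 1 / 2
  set R := ⌊rr (m + 1) k - 1⌋₊
  have hk1 : (1 : ℝ) ≤ k := by exact_mod_cast hk
  have hR : t - 3 / 2 < R := by
    have := Nat.lt_floor_add_one (rr (m + 1) k - 1)
    simp only [t]
    linarith
  have h4k : 4 * k ≤ 2 * R + 1 := by
    have : (4 * k : ℝ) ≤ 2 * R + 1 := by linarith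
    exact_mod_cast this
  have h4t : 4 * t ≤ 3 * ((2 * R + 1 : ℕ) : ℝ) := by push_cast; linarith
  have hslots := pow_le_mul_div_mul_pow (m := m) hk (by linarith) h4k h4t
  rw [rr_sub_half_pow m.add_one_ne_zero] at hslots
  rw [le_div_iff₀ (by positivity)]
  refine le_of_mul_le_mul_left ?_ (by positivity : (0 : ℝ) < k)
  linarith

/-- Enclosure bounds: there is `c₁ = c₁(d) < ∞` such that `ℙ(E_k^c) ≤ e^{-k}` for all
`k > c₁`. -/
theorem statement5 (d : ℕ) (hd : 1 ≤ d)
    (P : Measure (Config d)) (hP : IsBernoulliHalfProduct P) :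
    ∃ c₁ : ℝ, ∀ k : ℕ, c₁ < (k : ℝ) →
      P (Ek d k)ᶜ ≤ ENNReal.ofReal (Real.exp (-(k : ℝ))) := by
  obtain ⟨m, rfl⟩ : ∃ m, d = m + 1 := ⟨d - 1, by omega⟩
  obtain ⟨K, hK⟩ := eventually_atTop.1 (eventually_mul_pow_lt_two_pow 3 (m + 1))
  refine ⟨max K 1, fun k hk => ?_⟩
  have hKk : K ≤ k := by exact_mod_cast (le_max_left _ _).trans hk.le
  have hk1 : 1 ≤ k := by exact_mod_cast (le_max_right _ _).trans hk.le
  have h3k := mul_le_rr_sub_half m.add_one_ne_zero hk1 (hK k hKk).le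
  have hR : (⌊rr (m + 1) k - 1⌋₊ : ℝ) ≤ rr (m + 1) k - 1 :=
    Nat.floor_le (by linarith [Nat.one_le_cast (α := ℝ).2 hk1])
  calc P (Ek (m + 1) k)ᶜ ≤ _ := measure_mono (compl_Ek_subset hk1 (Nat.div_mul_le_self _ _) hR)
    _ ≤ _ := hP.measure_forall_ne_le (sub_left_injective.comp slotSite_injective) _
    _ ≤ _ := by
      gcongr
      simpa [Fintype.card_prod, Fintype.card_fun] using le_card_slots_div hk1 h3k

end
end

section
/- For ℙ-a.e. γ, for every integer k ≥ 1 and every site x ∈ ℤ^d, the connected component of x in ℝ^d ∖ ∪_{j > k} W_j(γ) is a bounded subset of ℝ^d; that is, almost surely all k-blobs containing lattice points are bounded. -/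
open MeasureTheory ENNReal

noncomputable section

/-!
Fix a site `x` and a scale `j`. The sites `x - s_j + (j a₁, a₂, …, a_d)` with
`|j a₁|, |a_i| ≤ ⌊r_j⌋` are candidate positions for a `j`-seed: a seed at one of them is
the anchor of a `j`-cutter whose centre lies within distance `r_j` of `x`, and then, for
`j > k`, the `k`-blob of `x` stays inside that cutter. The seed blocks of distinct candidates
are disjoint, so under the Bernoulli measure no candidate is a seed with probability
`(1 - 2^{-j})^N`, where `N ≥ j 2^j` for large `j`; this is at most `2^{-j}`. Hence almost
surely every site has candidate seeds at arbitrarily large scales.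
-/

namespace BlobBoundedness

variable {d : ℕ}

def cylinderEvent (T : Finset (Site d)) (q : Site d → Bool) : Set (Config d) :=
  {γ | ∀ x ∈ T, γ x = q x}

lemma measurableSet_cylinderEvent (T : Finset (Site d)) (q : Site d → Bool) :
    MeasurableSet (cylinderEvent T q) := by
  have h : cylinderEvent T q = ⋂ x ∈ T, (fun γ : Config d => γ x) ⁻¹' {q x} := by
    ext γ; simp [cylinderEvent]
  rw [h]
  exact .biInter T.countable_toSet fun x _ => measurable_pi_apply x (measurableSet_singleton _)

lemma cylinderEvent_inter_cylinderEvent {T B : Finset (Site d)} (hTB : Disjoint T B)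
    (q p : Site d → Bool) :
    cylinderEvent T q ∩ cylinderEvent B p = cylinderEvent (T ∪ B) (B.piecewise p q) := by
  ext γ
  simp only [cylinderEvent, Set.mem_inter_iff, Set.mem_ofPred_eq, Finset.forall_mem_union]
  refine and_congr (forall₂_congr fun x hx => ?_) (forall₂_congr fun x hx => ?_)
  · rw [Finset.piecewise_eq_of_notMem _ _ _ (Finset.disjoint_left.mp hTB hx)]
  · rw [Finset.piecewise_eq_of_mem _ _ _ hx]

/-- The cylinder event on `T` is carried along so that the induction on `s` goes through:
removing the block `a` splits off the cylinder event on `T ∪ B a`. -/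
lemma measure_cylinderEvent_inter_iInter_compl {ι : Type*} [DecidableEq ι]
    {P : Measure (Config d)} (hP : IsBernoulliHalfProduct P)
    (B : ι → Finset (Site d)) (p : ι → Site d → Bool) (s : Finset ι)
    (hB : (s : Set ι).PairwiseDisjoint B) (T : Finset (Site d)) (q : Site d → Bool)
    (hT : ∀ i ∈ s, Disjoint T (B i)) :
    P (cylinderEvent T q ∩ ⋂ i ∈ s, (cylinderEvent (B i) (p i))ᶜ) =
      (1 / 2) ^ T.card * ∏ i ∈ s, (1 - (1 / 2 : ℝ≥0∞) ^ (B i).card) := by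
  have := hP.1
  induction s using Finset.induction_on generalizing T q with
  | empty => simpa [cylinderEvent] using hP.2 T q
  | insert a s ha ih =>
    have hBs : (s : Set ι).PairwiseDisjoint B := hB.subset (by simp)
    have hTa : Disjoint T (B a) := hT a (Finset.mem_insert_self a s)
    have hBa : ∀ i ∈ s, Disjoint (B a) (B i) := fun i hi =>
      hB (by simp) (by simp [hi]) (by rintro rfl; exact ha hi)
    set R := ⋂ i ∈ s, (cylinderEvent (B i) (p i))ᶜ
    set q' := (B a).piecewise (p a) q
    have hR : MeasurableSet R :=
      .biInter s.countable_toSet fun i _ => (measurableSet_cylinderEvent _ _).compl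
    have hsplit : cylinderEvent T q ∩ ⋂ i ∈ insert a s, (cylinderEvent (B i) (p i))ᶜ =
        (cylinderEvent T q ∩ R) \ (cylinderEvent (T ∪ B a) q' ∩ R) := by
      rw [← cylinderEvent_inter_cylinderEvent hTa]
      ext γ
      simp only [R, Set.mem_inter_iff, Set.mem_sdiff, Set.mem_iInter, Finset.mem_insert,
        Set.mem_compl_iff, forall_eq_or_imp]
      tauto
    have hsub : cylinderEvent (T ∪ B a) q' ∩ R ⊆ cylinderEvent T q ∩ R := by
      rw [← cylinderEvent_inter_cylinderEvent hTa, Set.inter_assoc]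
      exact Set.inter_subset_inter_right _ Set.inter_subset_right
    have hprod_ne_top : ∏ i ∈ s, (1 - (1 / 2 : ℝ≥0∞) ^ (B i).card) ≠ ⊤ :=
      ENNReal.prod_ne_top fun i _ => ne_top_of_le_ne_top ENNReal.one_ne_top tsub_le_self
    rw [hsplit, measure_sdiff hsub ((measurableSet_cylinderEvent _ _).inter hR).nullMeasurableSet
        (measure_ne_top P _), ih hBs T q fun i hi => hT i (Finset.mem_insert_of_mem hi),
      ih hBs (T ∪ B a) q' fun i hi => Finset.disjoint_union_left.mpr
        ⟨hT i (Finset.mem_insert_of_mem hi), hBa i hi⟩,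
      Finset.card_union_of_disjoint hTa, Finset.prod_insert ha, pow_add, mul_assoc,
      ← ENNReal.mul_sub fun _ _ => ENNReal.pow_ne_top (by simp),
      ENNReal.sub_mul fun _ _ => hprod_ne_top, one_mul]

lemma measure_forall_notMem_cylinderEvent {ι : Type*} [DecidableEq ι]
    {P : Measure (Config d)} (hP : IsBernoulliHalfProduct P)
    (B : ι → Finset (Site d)) (p : ι → Site d → Bool) (s : Finset ι)
    (hB : (s : Set ι).PairwiseDisjoint B) :
    P {γ | ∀ i ∈ s, γ ∉ cylinderEvent (B i) (p i)} =
      ∏ i ∈ s, (1 - (1 / 2 : ℝ≥0∞) ^ (B i).card) := by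
  have h := measure_cylinderEvent_inter_iInter_compl hP B p s hB ∅ (fun _ => true) (by simp)
  rw [Finset.card_empty, pow_zero, one_mul] at h
  rw [← h]
  congr 1
  ext γ
  simp [cylinderEvent]

def seedBlock (w : Site d) (j : ℕ) : Finset (Site d) :=
  (Finset.range j).image fun n : ℕ => w + (n : ℤ) • e1 d

def seedPattern (w : Site d) : Site d → Bool := fun y => decide (y = w)

lemma add_smul_e1_apply (w : Site d) (n : ℤ) (i : Fin d) :
    (w + n • e1 d) i = w i + if (i : ℕ) = 0 then n else 0 := by
  by_cases h : (i : ℕ) = 0 <;> simp [e1, h]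

lemma add_smul_e1_injective (hd : 0 < d) (w : Site d) :
    Function.Injective fun n : ℤ => w + n • e1 d := by
  intro m n h
  have h0 := congrFun h ⟨0, hd⟩
  simp only [add_smul_e1_apply, if_true] at h0
  omega

lemma card_seedBlock (hd : 0 < d) (w : Site d) (j : ℕ) : (seedBlock w j).card = j := by
  rw [seedBlock, Finset.card_image_of_injective _ fun m n h => by
    exact_mod_cast add_smul_e1_injective hd w h, Finset.card_range]

lemma isSeed_iff_mem_cylinderEvent (hd : 0 < d) {γ : Config d} {j : ℕ} (hj : 1 ≤ j)
    (w : Site d) : IsSeed γ j w ↔ γ ∈ cylinderEvent (seedBlock w j) (seedPattern w) := by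
  have hpat : ∀ n : ℕ, seedPattern w (w + (n : ℤ) • e1 d) = decide (n = 0) := fun n => by
    rw [seedPattern, decide_eq_decide,
      (add_smul_e1_injective hd w).eq_iff' (by simp : w + (0 : ℤ) • e1 d = w)]
    exact Nat.cast_eq_zero
  simp only [IsSeed, cylinderEvent, seedBlock, Finset.forall_mem_image, Finset.mem_range, hpat]
  constructor
  · rintro ⟨h0, h⟩ n hn
    rcases Nat.eq_zero_or_pos n with rfl | hpos
    · simpa using h0
    · simpa [hpos.ne'] using h n hpos (by omega)
  · intro h
    exact ⟨by simpa using h (show 0 < j by omega),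
      fun n hn1 hnj => by simpa [show n ≠ 0 by omega] using h (show n < j by omega)⟩

def stretch (j : ℤ) (v : Site d) : Site d := fun i => if (i : ℕ) = 0 then j * v i else v i

/-- The blocks are horizontal segments of length `j` whose left ends have horizontal
spacing a multiple of `j`. -/
lemma pairwise_disjoint_seedBlock_stretch (y : Site d) (j : ℕ) :
    Pairwise (Function.onFun Disjoint fun v : Site d => seedBlock (y + stretch j v) j) := by
  intro v v' hvv'
  refine Finset.disjoint_left.mpr fun c hc hc' => hvv' ?_
  simp only [seedBlock, Finset.mem_image, Finset.mem_range] at hc hc'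
  obtain ⟨n, hn, rfl⟩ := hc
  obtain ⟨n', hn', h⟩ := hc'
  funext i
  have hi := congrFun h i
  rw [add_smul_e1_apply, add_smul_e1_apply] at hi
  simp only [Pi.add_apply, stretch] at hi
  by_cases h0 : (i : ℕ) = 0
  · simp only [h0, if_true] at hi
    have hj : (0 : ℤ) < j := by omega
    have : v' i - v i < 1 := (mul_lt_mul_iff_of_pos_left hj).mp (by linarith)
    have : v i - v' i < 1 := (mul_lt_mul_iff_of_pos_left hj).mp (by linarith)
    omega
  · simpa [h0] using hi.symm

def gridCorner (d : ℕ) (S : ℤ) (j : ℕ) : Site d := fun i => if (i : ℕ) = 0 then S / j else S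

def grid (d : ℕ) (S : ℤ) (j : ℕ) : Finset (Site d) :=
  Finset.Icc (-gridCorner d S j) (gridCorner d S j)

lemma abs_stretch_le_of_mem_grid {S : ℤ} (hS : 0 ≤ S) {j : ℕ} {v : Site d}
    (hv : v ∈ grid d S j) (i : Fin d) : |stretch j v i| ≤ S := by
  obtain ⟨hlo, hhi⟩ := Finset.mem_Icc.mp hv
  have hvi : |v i| ≤ gridCorner d S j i := abs_le.mpr ⟨by simpa using hlo i, hhi i⟩
  by_cases h0 : (i : ℕ) = 0
  · simp only [stretch, gridCorner, h0, if_true] at hvi ⊢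
    rcases Nat.eq_zero_or_pos j with rfl | hj
    · simpa using hS
    calc |(j : ℤ) * v i| = j * |v i| := by rw [abs_mul, Nat.abs_cast]
      _ ≤ j * (S / j) := by gcongr
      _ ≤ S := Int.mul_ediv_self_le (by omega)
  · simpa [stretch, gridCorner, h0] using hvi

lemma card_grid (hd : 0 < d) {S : ℤ} (hS : 0 ≤ S) (j : ℕ) :
    ((grid d S j).card : ℤ) = (2 * (S / j) + 1) * (2 * S + 1) ^ (d - 1) := by
  obtain ⟨d, rfl⟩ : ∃ d', d = d' + 1 := ⟨d - 1, by omega⟩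
  have hSj : 0 ≤ S / j := Int.ediv_nonneg hS (by positivity)
  simp only [grid, Pi.card_Icc, Int.card_Icc, Fin.prod_univ_succ, gridCorner, Pi.neg_apply,
    Fin.val_zero, Fin.val_succ, if_true, Nat.add_one_ne_zero, if_false, Finset.prod_const,
    Finset.card_univ, Fintype.card_fin, Nat.add_sub_cancel]
  push_cast
  rw [Int.toNat_of_nonneg (by omega), Int.toNat_of_nonneg (by omega)]
  ring

/-- The `j` horizontal slots per grid point fill the cube `[-S, S]^d` up to a factor `2`. -/
lemma pow_le_mul_card_grid (hd : 0 < d) {S : ℤ} {j : ℕ} (hj : 1 ≤ j)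
    (hjS : (j : ℤ) ≤ S + 1) :
    (2 * S + 1) ^ d ≤ 2 * j * ((grid d S j).card : ℤ) := by
  have hS : 0 ≤ S := by omega
  rw [card_grid hd hS]
  have hjq : S < j * (S / j) + j := Int.lt_mul_ediv_self_add (by omega)
  have hrow : 2 * S + 1 ≤ 2 * j * (2 * (S / j) + 1) := by nlinarith
  calc (2 * S + 1) ^ d = (2 * S + 1) * (2 * S + 1) ^ (d - 1) := by
        rw [← pow_succ', Nat.sub_add_cancel hd]
    _ ≤ 2 * j * (2 * (S / j) + 1) * (2 * S + 1) ^ (d - 1) := by gcongr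
    _ = _ := by ring

lemma floor_rr_nonneg (d j : ℕ) : 0 ≤ ⌊rr d j⌋ :=
  Int.floor_nonneg.mpr (by unfold rr; positivity)

lemma two_pow_mul_le_two_floor_rr_add_one_pow (hd : 0 < d) (j : ℕ) :
    (2 : ℝ) ^ d * (2 ^ j * j ^ 2) ≤ ((2 * ⌊rr d j⌋ + 1 : ℤ) : ℝ) ^ d := by
  set X := ((2 : ℝ) ^ j * (j : ℝ) ^ 2) ^ ((d : ℝ)⁻¹)
  have hX : 0 ≤ X := by positivity
  have hXd : X ^ d = 2 ^ j * j ^ 2 := Real.rpow_inv_natCast_pow (by positivity) hd.ne'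
  have hfloor : rr d j - 1 < ⌊rr d j⌋ := Int.sub_one_lt_floor _
  have hrr : rr d j = X + 1 / 2 := rfl
  rw [← hXd, ← mul_pow]
  gcongr
  push_cast
  linarith

lemma eventually_le_floor_rr (hd : 0 < d) :
    ∀ᶠ j : ℕ in Filter.atTop, (j : ℤ) ≤ ⌊rr d j⌋ := by
  have hsmall : ∀ᶠ j : ℕ in Filter.atTop, (j : ℝ) ^ d / 2 ^ j < 1 :=
    (tendsto_pow_const_div_const_pow_of_one_lt d one_lt_two).eventually (gt_mem_nhds one_pos)
  filter_upwards [hsmall, Filter.eventually_ge_atTop 1] with j hj hj1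
  have hpow : (j : ℝ) ^ d ≤ 2 ^ j * j ^ 2 := by
    rw [div_lt_one (by positivity)] at hj
    have : (1 : ℝ) ≤ (j : ℝ) ^ 2 := one_le_pow₀ (by exact_mod_cast hj1)
    nlinarith [pow_pos (two_pos (α := ℝ)) j]
  have hroot : (j : ℝ) ≤ ((2 : ℝ) ^ j * (j : ℝ) ^ 2) ^ ((d : ℝ)⁻¹) := by
    calc (j : ℝ) = ((j : ℝ) ^ d) ^ ((d : ℝ)⁻¹) :=
          (Real.pow_rpow_inv_natCast (Nat.cast_nonneg j) hd.ne').symm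
      _ ≤ _ := by gcongr
  rw [Int.le_floor, rr]
  push_cast
  linarith

lemma eventually_mul_two_pow_le_card_grid (hd : 0 < d) :
    ∀ᶠ j : ℕ in Filter.atTop, j * 2 ^ j ≤ (grid d ⌊rr d j⌋ j).card := by
  filter_upwards [eventually_le_floor_rr hd, Filter.eventually_ge_atTop 1] with j hjS hj
  have hgrid : ((2 * ⌊rr d j⌋ + 1 : ℤ) : ℝ) ^ d ≤ 2 * j * (grid d ⌊rr d j⌋ j).card :=
    mod_cast pow_le_mul_card_grid hd hj (by omega)
  have hd2 : (2 : ℝ) ≤ 2 ^ d := le_self_pow₀ one_le_two hd.ne'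
  have hj' : (0 : ℝ) < j := by exact_mod_cast hj
  have hbound := two_pow_mul_le_two_floor_rr_add_one_pow hd j
  have : (2 : ℝ) * j * (j * 2 ^ j) ≤ 2 * j * (grid d ⌊rr d j⌋ j).card :=
    calc (2 : ℝ) * j * (j * 2 ^ j) = 2 * (2 ^ j * j ^ 2) := by ring
      _ ≤ 2 ^ d * (2 ^ j * j ^ 2) := by gcongr
      _ ≤ _ := hbound.trans hgrid
  exact_mod_cast le_of_mul_le_mul_left this (by positivity)

lemma one_sub_half_pow_pow_two_pow_le (j : ℕ) :
    (1 - (1 / 2 : ℝ≥0∞) ^ j) ^ 2 ^ j ≤ 1 / 2 := by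
  have hreal : (1 - 1 / (2 : ℝ) ^ j) ^ 2 ^ j ≤ 1 / 2 := by
    calc (1 - 1 / (2 : ℝ) ^ j) ^ 2 ^ j = (1 - 1 / ((2 ^ j : ℕ) : ℝ)) ^ 2 ^ j := by
          push_cast; rfl
      _ ≤ Real.exp (-1) := Real.one_sub_div_pow_le_exp_neg (by exact_mod_cast Nat.one_le_two_pow)
      _ ≤ 1 / 2 := by
        rw [Real.exp_neg, one_div]
        have := Real.exp_one_gt_d9
        exact inv_anti₀ two_pos (by linarith)
  have hle : 1 / (2 : ℝ) ^ j ≤ 1 := by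
    rw [div_le_one (by positivity)]; exact one_le_pow₀ one_le_two
  calc (1 - (1 / 2 : ℝ≥0∞) ^ j) ^ 2 ^ j
      = ENNReal.ofReal ((1 - 1 / (2 : ℝ) ^ j) ^ 2 ^ j) := by
        rw [ENNReal.ofReal_pow (by linarith), ENNReal.ofReal_sub _ (by positivity),
          ENNReal.ofReal_one, ENNReal.ofReal_div_of_pos (by positivity), ENNReal.ofReal_one,
          ENNReal.ofReal_pow zero_le_two, ENNReal.ofReal_ofNat]
        simp [ENNReal.inv_pow]
    _ ≤ ENNReal.ofReal (1 / 2) := ENNReal.ofReal_le_ofReal hreal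
    _ = 1 / 2 := by rw [ENNReal.ofReal_div_of_pos two_pos, ENNReal.ofReal_one, ENNReal.ofReal_ofNat]

/-- A seed `w = x - s_j + stretch j v` would anchor a `j`-cutter centred at `x + stretch j v`,
within distance `⌊r_j⌋` of `x`. -/
def noCandidateSeed (x : Site d) (j : ℕ) : Set (Config d) :=
  {γ | ∀ v ∈ grid d ⌊rr d j⌋ j, ¬ IsSeed γ j (x - ss d j + stretch j v)}

lemma measure_noCandidateSeed (hd : 0 < d) {P : Measure (Config d)}
    (hP : IsBernoulliHalfProduct P) (x : Site d) {j : ℕ} (hj : 1 ≤ j) :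
    P (noCandidateSeed x j) = (1 - (1 / 2 : ℝ≥0∞) ^ j) ^ (grid d ⌊rr d j⌋ j).card := by
  have h := measure_forall_notMem_cylinderEvent hP (fun v => seedBlock (x - ss d j + stretch j v) j)
    (fun v => seedPattern (x - ss d j + stretch j v)) (grid d ⌊rr d j⌋ j)
    ((pairwise_disjoint_seedBlock_stretch _ j).set_pairwise _)
  simp only [card_seedBlock hd, Finset.prod_const] at h
  rw [← h]
  congr 1
  ext γ
  simp only [noCandidateSeed, isSeed_iff_mem_cylinderEvent hd hj, Set.mem_ofPred_eq]

lemma eventually_measure_noCandidateSeed_le (hd : 0 < d) {P : Measure (Config d)}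
    (hP : IsBernoulliHalfProduct P) (x : Site d) :
    ∀ᶠ j : ℕ in Filter.atTop, P (noCandidateSeed x j) ≤ (1 / 2) ^ j := by
  filter_upwards [eventually_mul_two_pow_le_card_grid hd, Filter.eventually_ge_atTop 1]
    with j hcard hj
  rw [measure_noCandidateSeed hd hP x hj]
  calc (1 - (1 / 2 : ℝ≥0∞) ^ j) ^ (grid d ⌊rr d j⌋ j).card
      ≤ (1 - (1 / 2 : ℝ≥0∞) ^ j) ^ (2 ^ j * j) :=
        pow_le_pow_right_of_le_one' tsub_le_self (by rwa [mul_comm])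
    _ ≤ (1 / 2) ^ j := by
        rw [pow_mul]
        gcongr
        exact one_sub_half_pow_pow_two_pow_le j

lemma measure_iInter_noCandidateSeed (hd : 0 < d) {P : Measure (Config d)}
    (hP : IsBernoulliHalfProduct P) (x : Site d) (k : ℕ) :
    P (⋂ j > k, noCandidateSeed x j) = 0 := by
  refine nonpos_iff_eq_zero.mp (ge_of_tendsto (ENNReal.tendsto_pow_atTop_nhds_zero_of_lt_one
    (by norm_num : (1 / 2 : ℝ≥0∞) < 1)) ?_)
  filter_upwards [eventually_measure_noCandidateSeed_le hd hP x, Filter.eventually_gt_atTop k]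
    with j hj hkj
  exact (measure_mono (Set.iInter₂_subset j hkj)).trans hj

lemma connectedComponentIn_compl_subset_closedBall {E : Type*} [SeminormedAddCommGroup E]
    {C : Set E} {z p : E} {r : ℝ} (hC : Metric.sphere z r ⊆ C) (hp : dist p z ≤ r) :
    connectedComponentIn Cᶜ p ⊆ Metric.closedBall z r := by
  intro q hq
  have hpC : p ∈ Cᶜ := connectedComponentIn_nonempty_iff.mp ⟨q, hq⟩
  by_contra hqr
  rw [Metric.mem_closedBall, not_le] at hqr
  obtain ⟨y, hy, hyr⟩ := isPreconnected_connectedComponentIn.intermediate_value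
    (mem_connectedComponentIn hpC) hq (continuous_id.dist continuous_const).continuousOn
    ⟨hp, hqr.le⟩
  exact connectedComponentIn_subset _ _ hy (hC hyr)

lemma isBounded_blob_of_isSeed {γ : Config d} {k j : ℕ} (hkj : k < j) {w : Site d}
    (hw : IsSeed γ j w) {x : Site d} (hx : ‖toR x - toR (w + ss d j)‖ ≤ rr d j) :
    Bornology.IsBounded (blob γ k (toR x)) := by
  have hsphere : Metric.sphere (toR (w + ss d j)) (rr d j) ⊆
      ⋃ j' ∈ {j' : ℕ | k < j'}, cutters γ j' := fun y hy =>
    Set.mem_biUnion hkj <| Set.mem_biUnion (by simpa using hw) (mem_sphere_iff_norm.mp hy)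
  exact Metric.isBounded_closedBall.subset
    (connectedComponentIn_compl_subset_closedBall hsphere (by rwa [dist_eq_norm]))

lemma norm_toR_sub_le {x y : Site d} {S : ℤ} (hS : 0 ≤ S) (h : ∀ i, |x i - y i| ≤ S) :
    ‖toR x - toR y‖ ≤ S := by
  refine (pi_norm_le_iff_of_nonneg (by exact_mod_cast hS)).mpr fun i => ?_
  rw [Pi.sub_apply, toR, toR, Real.norm_eq_abs, ← Int.cast_sub, ← Int.cast_abs]
  exact_mod_cast h i

lemma isBounded_blob_of_notMem_noCandidateSeed {γ : Config d} {k j : ℕ} (hkj : k < j)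
    {x : Site d} (hγ : γ ∉ noCandidateSeed x j) : Bornology.IsBounded (blob γ k (toR x)) := by
  simp only [noCandidateSeed, Set.mem_ofPred_eq, not_forall, not_not] at hγ
  obtain ⟨v, hv, hseed⟩ := hγ
  refine isBounded_blob_of_isSeed hkj hseed
    ((norm_toR_sub_le (floor_rr_nonneg d j) fun i => ?_).trans (Int.floor_le _))
  have hdiff : x i - (x - ss d j + stretch j v + ss d j) i = -stretch j v i := by
    simp only [Pi.add_apply, Pi.sub_apply]; ring
  rw [hdiff, abs_neg]
  exact abs_stretch_le_of_mem_grid (floor_rr_nonneg d j) hv i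

end BlobBoundedness

/-- Almost surely, every `k`-blob containing a lattice point is bounded. -/
theorem statement6 (d : ℕ) (hd : 1 ≤ d)
    (P : Measure (Config d)) (hP : IsBernoulliHalfProduct P) :
    ∀ᵐ γ ∂P, ∀ k : ℕ, 1 ≤ k → ∀ x : Site d,
      Bornology.IsBounded (blob γ k (toR x)) := by
  have hcandidate :
      ∀ k (x : Site d), ∀ᵐ γ ∂P, γ ∉ ⋂ j > k, BlobBoundedness.noCandidateSeed x j :=
    fun k x => measure_eq_zero_iff_ae_notMem.mp
      (BlobBoundedness.measure_iInter_noCandidateSeed hd hP x k)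
  filter_upwards [ae_all_iff.mpr fun k => ae_all_iff.mpr (hcandidate k)] with γ hγ k _ x
  obtain ⟨j, hkj, hj⟩ : ∃ j > k, γ ∉ BlobBoundedness.noCandidateSeed x j := by
    simpa using hγ k x
  exact BlobBoundedness.isBounded_blob_of_notMem_noCandidateSeed hkj hj

end
end

section
/- For ℙ-a.e. γ, for every site x ∈ ℤ^d there exists an integer k ≥ 1 such that x lies in the same k-blob as the origin; equivalently, ∪_{k ≥ 1} L_k = ℤ^d almost surely (the clumping rule induced by the blobs is connected). -/
open MeasureTheory ENNReal

noncomputable section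

lemma e1_apply_zero {d : ℕ} (hd : 1 ≤ d) : e1 d ⟨0, hd⟩ = 1 := by simp [e1]

lemma seed_eval {d : ℕ} (hd : 1 ≤ d) (y : Site d) (n : ℕ) :
    (y + (n : ℤ) • e1 d) ⟨0, hd⟩ = y ⟨0, hd⟩ + n := by
  simp [Pi.add_apply, Pi.smul_apply, e1_apply_zero hd]

lemma measure_isSeed_le {d : ℕ} (hd : 1 ≤ d) {P : Measure (Config d)}
    (hP : IsBernoulliHalfProduct P) (j : ℕ) (y : Site d) :
    P {γ | IsSeed γ j y} ≤ (1 / 2 : ℝ≥0∞) ^ j := by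
  classical
  set s : Finset (Site d) := (Finset.range j).image (fun n : ℕ => y + (n : ℤ) • e1 d) with hs
  have hinj : Function.Injective (fun n : ℕ => y + (n : ℤ) • e1 d) := by
    intro m n h
    have h2 := congrFun h ⟨0, hd⟩
    simp only at h2
    rw [seed_eval hd, seed_eval hd] at h2
    omega
  have hcard : s.card = j := by
    rw [hs, Finset.card_image_of_injective _ hinj, Finset.card_range]
  have hsub : {γ : Config d | IsSeed γ j y} ⊆
      {γ : Config d | ∀ z ∈ s, γ z = (fun z => decide (z = y)) z} := by
    intro γ hγ z hz
    simp only [hs, Finset.mem_image, Finset.mem_range] at hz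
    obtain ⟨n, hn, rfl⟩ := hz
    match n with
    | 0 =>
      simp only [Nat.cast_zero, zero_smul, add_zero]
      simp [hγ.1]
    | Nat.succ m =>
      have hne : y + ((m + 1 : ℕ) : ℤ) • e1 d ≠ y := by
        intro h
        have := congrFun h ⟨0, hd⟩
        rw [seed_eval hd] at this
        omega
      have h3 := hγ.2 (m + 1) (by omega) (by omega)
      simp only at h3 ⊢
      rw [h3, decide_eq_false hne]
  calc P {γ | IsSeed γ j y} ≤ P {γ : Config d | ∀ z ∈ s, γ z = (fun z => decide (z = y)) z} :=
        measure_mono hsub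
    _ = (1 / 2 : ℝ≥0∞) ^ s.card := hP.2 s _
    _ = (1 / 2 : ℝ≥0∞) ^ j := by rw [hcard]

lemma annulus_card {d : ℕ} (hd : 1 ≤ d) (lo hi : ℝ) (hlohi : lo ≤ hi) (hhi : 0 ≤ hi) :
    ∃ G : Finset (Site d), (∀ c : Site d, lo ≤ ‖toR c‖ → ‖toR c‖ ≤ hi → c ∈ G) ∧
      ((G.card : ℝ) ≤ d * (2 * (hi - lo) + 4) * (2 * hi + 3) ^ (d - 1)) := by
  classical
  set L : ℤ := ⌈lo⌉ with hL
  set M : ℤ := ⌈hi⌉ with hM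
  have hLM : L ≤ M := Int.ceil_le_ceil hlohi
  have hM0 : 0 ≤ M := by positivity
  set narrow : Finset ℤ := Finset.Icc L M ∪ Finset.Icc (-M) (-L) with hnarrow
  set wide : Finset ℤ := Finset.Icc (-M) M with hwide
  set T : Fin d → Fin d → Finset ℤ := fun i t => if t = i then narrow else wide with hT
  refine ⟨Finset.univ.biUnion (fun i => Fintype.piFinset (T i)), ?_, ?_⟩
  · intro c h1 h2
    -- find a coordinate achieving lower bound
    have hex : ∃ i : Fin d, lo ≤ |(c i : ℝ)| := by
      by_contra hno
      push_neg at hno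
      rcases le_or_gt lo 0 with h | h
      · exact absurd (hno ⟨0, hd⟩) (not_lt.2 (h.trans (abs_nonneg _)))
      · have : ‖toR c‖ < lo := by
          rw [pi_norm_lt_iff h]
          intro i
          rw [Real.norm_eq_abs]
          exact hno i
        linarith
    obtain ⟨i, hi2⟩ := hex
    have hall : ∀ t : Fin d, -M ≤ c t ∧ c t ≤ M := by
      intro t
      have h3 : |(c t : ℝ)| ≤ hi := by
        have := norm_le_pi_norm (toR c) t
        rw [Real.norm_eq_abs] at this
        exact this.trans h2
      have h4 : (c t : ℝ) ≤ (M : ℝ) := (le_abs_self _).trans (h3.trans (Int.le_ceil hi))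
      have h5 : ((-M : ℤ) : ℝ) ≤ (c t : ℝ) := by
        push_cast
        have := (neg_abs_le ((c t : ℝ)))
        have h6 : -(hi) ≤ (c t : ℝ) := by
          have := neg_le_neg h3
          linarith [neg_abs_le ((c t : ℝ))]
        have : -((M : ℤ) : ℝ) ≤ -hi := by
          simp only [neg_le_neg_iff]
          exact Int.le_ceil hi
        linarith
      exact ⟨by exact_mod_cast h5, by exact_mod_cast h4⟩
    have hmem : c ∈ Fintype.piFinset (T i) := by
      rw [Fintype.mem_piFinset]
      intro t
      show c t ∈ if t = i then narrow else wide
      by_cases ht : t = i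
      · subst ht
        rw [if_pos rfl, hnarrow, Finset.mem_union, Finset.mem_Icc, Finset.mem_Icc]
        rcases abs_cases ((c t : ℝ)) with ⟨heq, _⟩ | ⟨heq, _⟩
        · left
          refine ⟨?_, (hall t).2⟩
          rw [Int.ceil_le]; rw [heq] at hi2; exact hi2
        · right
          refine ⟨(hall t).1, ?_⟩
          rw [heq] at hi2
          have hcl : L ≤ -(c t) := by
            rw [Int.ceil_le]
            push_cast
            exact hi2
          omega
      · rw [if_neg ht, hwide, Finset.mem_Icc]
        exact hall t
    exact Finset.mem_biUnion.2 ⟨i, Finset.mem_univ i, hmem⟩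
  · -- cardinality bound
    have hbi : (Finset.univ.biUnion (fun i => Fintype.piFinset (T i))).card
        ≤ ∑ i : Fin d, (Fintype.piFinset (T i)).card := Finset.card_biUnion_le
    have hprod : ∀ i : Fin d, (Fintype.piFinset (T i)).card
        = narrow.card * wide.card ^ (d - 1) := by
      intro i
      rw [Fintype.card_piFinset]
      have h1 : (T i i).card * ∏ t ∈ Finset.univ.erase i, (T i t).card
          = ∏ t : Fin d, (T i t).card :=
        Finset.mul_prod_erase Finset.univ (fun t => (T i t).card) (Finset.mem_univ i)
      rw [← h1]
      have h2 : (T i i).card = narrow.card := by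
        rw [show T i i = narrow from if_pos rfl]
      have h3 : ∏ t ∈ Finset.univ.erase i, (T i t).card = wide.card ^ (d - 1) := by
        rw [Finset.prod_congr rfl (fun t ht =>
          (by rw [show T i t = wide from if_neg (Finset.ne_of_mem_erase ht)] :
            (T i t).card = wide.card)),
          Finset.prod_const, Finset.card_erase_of_mem (Finset.mem_univ i), Finset.card_univ,
          Fintype.card_fin]
      rw [h2, h3]
    have hsum : ∑ i : Fin d, (Fintype.piFinset (T i)).card
        = d * (narrow.card * wide.card ^ (d - 1)) := by
      rw [Finset.sum_congr rfl (fun i _ => hprod i), Finset.sum_const, Finset.card_univ,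
        Fintype.card_fin, smul_eq_mul]
    have hnc : (narrow.card : ℝ) ≤ 2 * (hi - lo) + 4 := by
      have hu : narrow.card ≤ (Finset.Icc L M).card + (Finset.Icc (-M) (-L)).card :=
        Finset.card_union_le _ _
      have ha : ((Finset.Icc L M).card : ℤ) = M + 1 - L := by
        rw [Int.card_Icc, Int.toNat_of_nonneg (by omega)]
      have hb : ((Finset.Icc (-M) (-L)).card : ℤ) = -L + 1 - -M := by
        rw [Int.card_Icc, Int.toNat_of_nonneg (by omega)]
      have hc : (narrow.card : ℤ) ≤ (M + 1 - L) + (-L + 1 - -M) := by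
        rw [← ha, ← hb]; exact_mod_cast hu
      have h5 : (narrow.card : ℝ) ≤ ((M : ℝ) + 1 - (L : ℝ)) + (-(L : ℝ) + 1 - -(M : ℝ)) := by
        exact_mod_cast hc
      have hML : (M : ℝ) < hi + 1 := Int.ceil_lt_add_one hi
      have hLlo : lo ≤ (L : ℝ) := Int.le_ceil lo
      linarith
    have hwc : (wide.card : ℝ) ≤ 2 * hi + 3 := by
      have ha : ((Finset.Icc (-M) M).card : ℤ) = M + 1 - -M := by
        rw [Int.card_Icc, Int.toNat_of_nonneg (by omega)]
      have hc : (wide.card : ℤ) = M + 1 - -M := ha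
      have h5 : (wide.card : ℝ) = (M : ℝ) + 1 - -(M : ℝ) := by exact_mod_cast hc
      have hML : (M : ℝ) < hi + 1 := Int.ceil_lt_add_one hi
      linarith
    have hfinal : ((Finset.univ.biUnion (fun i => Fintype.piFinset (T i))).card : ℝ)
        ≤ (d : ℝ) * ((narrow.card : ℝ) * (wide.card : ℝ) ^ (d - 1)) := by
      have h6 := hbi.trans_eq hsum
      have h7 : ((Finset.univ.biUnion (fun i => Fintype.piFinset (T i))).card : ℝ)
          ≤ ((d * (narrow.card * wide.card ^ (d - 1)) : ℕ) : ℝ) := Nat.cast_le.mpr h6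
      push_cast at h7
      exact h7
    calc ((Finset.univ.biUnion (fun i => Fintype.piFinset (T i))).card : ℝ)
        ≤ (d : ℝ) * ((narrow.card : ℝ) * (wide.card : ℝ) ^ (d - 1)) := hfinal
      _ ≤ (d : ℝ) * ((2 * (hi - lo) + 4) * (2 * hi + 3) ^ (d - 1)) := by
          apply mul_le_mul_of_nonneg_left _ (Nat.cast_nonneg d)
          exact mul_le_mul hnc (pow_le_pow_left₀ (Nat.cast_nonneg _) hwc _)
            (by positivity) (by linarith)
      _ = (d : ℝ) * (2 * (hi - lo) + 4) * (2 * hi + 3) ^ (d - 1) := by ring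

lemma aj_nonneg (d j : ℕ) : 0 ≤ ((2 : ℝ) ^ j * (j : ℝ) ^ 2) ^ ((d : ℝ)⁻¹) :=
  Real.rpow_nonneg (by positivity) _

lemma rr_nonneg (d k : ℕ) : 0 ≤ rr d k := by
  have := aj_nonneg d k
  unfold rr; linarith

lemma add_pow_le'' {u v : ℝ} (hu : 0 ≤ u) (hv : 0 ≤ v) (m : ℕ) :
    (u + v) ^ m ≤ 2 ^ m * (u ^ m + v ^ m) := by
  have h1 : u + v ≤ 2 * max u v := by
    rcases max_choice u v with h | h <;> rw [h] <;>
      [linarith [le_max_right u v, max_choice u v, le_max_right u v, (le_max_right u v).trans_eq h];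
       linarith [(le_max_left u v).trans_eq h]]
  have h2 : (u + v) ^ m ≤ (2 * max u v) ^ m :=
    pow_le_pow_left₀ (by positivity) h1 m
  have h3 : (max u v) ^ m ≤ u ^ m + v ^ m := by
    rcases max_choice u v with h | h <;> rw [h]
    · exact le_add_of_nonneg_right (pow_nonneg hv m)
    · exact le_add_of_nonneg_left (pow_nonneg hu m)
  calc (u + v) ^ m ≤ (2 * max u v) ^ m := h2
    _ = 2 ^ m * (max u v) ^ m := mul_pow 2 _ m
    _ ≤ 2 ^ m * (u ^ m + v ^ m) := by
        exact mul_le_mul_of_nonneg_left h3 (by positivity)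

lemma summable_key {d : ℕ} (hd : 1 ≤ d) :
    Summable (fun j : ℕ =>
      (((2 : ℝ) ^ j * (j : ℝ) ^ 2) ^ ((d : ℝ)⁻¹)) ^ (d - 1) * (1 / 2 : ℝ) ^ j) := by
  set m : ℕ := d - 1 with hm
  have hdpos : (0 : ℝ) < d := by exact_mod_cast hd
  set e : ℝ := (d : ℝ)⁻¹ * (m : ℕ) with he
  have hmcast : (m : ℝ) = (d : ℝ) - 1 := by
    rw [hm]; push_cast [Nat.cast_sub hd]; ring
  have he01 : 0 ≤ e ∧ e < 1 := by
    constructor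
    · positivity
    · rw [he, hmcast]
      rw [inv_mul_eq_div, div_lt_one hdpos]
      linarith
  set q : ℝ := (2 : ℝ) ^ (e - 1 : ℝ) with hq
  have hq0 : 0 < q := Real.rpow_pos_of_pos (by norm_num) _
  have hq1 : q < 1 := Real.rpow_lt_one_of_one_lt_of_neg (by norm_num) (by linarith [he01.2])
  -- the exponential part collapses
  have hqj : ∀ j : ℕ, ((2 : ℝ) ^ j) ^ e * (1 / 2 : ℝ) ^ j = q ^ j := by
    intro j
    have h2 : ((2 : ℝ) ^ j : ℝ) = (2 : ℝ) ^ (j : ℝ) := (Real.rpow_natCast 2 j).symm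
    have hhalf : ((1 / 2 : ℝ)) ^ j = (2 : ℝ) ^ (-(j : ℝ)) := by
      rw [Real.rpow_neg (by norm_num), Real.rpow_natCast, one_div, inv_pow]
    rw [h2, ← Real.rpow_mul (by norm_num), hhalf, ← Real.rpow_add (by norm_num)]
    rw [hq, ← Real.rpow_natCast ((2:ℝ) ^ (e - 1 : ℝ)) j, ← Real.rpow_mul (by norm_num)]
    ring_nf
  -- pointwise bound
  have hbound : ∀ j : ℕ,
      (((2 : ℝ) ^ j * (j : ℝ) ^ 2) ^ ((d : ℝ)⁻¹)) ^ m * (1 / 2 : ℝ) ^ j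
        ≤ ((j : ℝ) ^ 2 + 1) * q ^ j := by
    intro j
    have hX : (0 : ℝ) ≤ (2 : ℝ) ^ j * (j : ℝ) ^ 2 := by positivity
    have h1 : (((2 : ℝ) ^ j * (j : ℝ) ^ 2) ^ ((d : ℝ)⁻¹)) ^ m
        = (((2 : ℝ) ^ j) ^ e) * (((j : ℝ) ^ 2) ^ e) := by
      rw [← Real.rpow_natCast (((2 : ℝ) ^ j * (j : ℝ) ^ 2) ^ ((d : ℝ)⁻¹)) m,
        ← Real.rpow_mul hX, ← he, Real.mul_rpow (by positivity) (by positivity)]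
    have h2 : ((j : ℝ) ^ 2) ^ e ≤ (j : ℝ) ^ 2 + 1 := by
      rcases Nat.eq_zero_or_pos j with hj | hj
      · subst hj
        have : ((0 : ℝ) ^ 2 : ℝ) ^ e ≤ 1 :=
          Real.rpow_le_one (by norm_num) (by norm_num) he01.1
        simpa using this.trans (by norm_num)
      · have hj1 : (1 : ℝ) ≤ (j : ℝ) ^ 2 := by
          have : (1 : ℝ) ≤ (j : ℝ) := by exact_mod_cast hj
          nlinarith
        have := Real.rpow_le_rpow_of_exponent_le hj1 (le_of_lt he01.2)
        rw [Real.rpow_one] at this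
        linarith
    calc (((2 : ℝ) ^ j * (j : ℝ) ^ 2) ^ ((d : ℝ)⁻¹)) ^ m * (1 / 2 : ℝ) ^ j
        = (((j : ℝ) ^ 2) ^ e) * ((((2 : ℝ) ^ j) ^ e) * (1 / 2 : ℝ) ^ j) := by
          rw [h1]; ring
      _ = (((j : ℝ) ^ 2) ^ e) * q ^ j := by rw [hqj j]
      _ ≤ ((j : ℝ) ^ 2 + 1) * q ^ j := by
          exact mul_le_mul_of_nonneg_right h2 (le_of_lt (pow_pos hq0 j))
  -- summability of the majorant
  have hsum : Summable (fun j : ℕ => ((j : ℝ) ^ 2 + 1) * q ^ j) := by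
    have h1 : Summable (fun j : ℕ => (j : ℝ) ^ 2 * q ^ j) :=
      summable_pow_mul_geometric_of_norm_lt_one 2
        (by rw [Real.norm_eq_abs, abs_of_pos hq0]; exact hq1)
    have h2 : Summable (fun j : ℕ => q ^ j) :=
      summable_geometric_of_lt_one (le_of_lt hq0) hq1
    exact (h1.add h2).congr (fun j => by ring)
  exact Summable.of_nonneg_of_le (fun j => by positivity) hbound hsum

lemma summable_main {d : ℕ} (hd : 1 ≤ d) (C B : ℝ) (hC : 0 ≤ C) (hB : 0 ≤ B) :
    Summable (fun j : ℕ => C * (2 * rr d j + B) ^ (d - 1) * (1 / 2 : ℝ) ^ j) := by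
  set m : ℕ := d - 1 with hm
  set a : ℕ → ℝ := fun j => ((2 : ℝ) ^ j * (j : ℝ) ^ 2) ^ ((d : ℝ)⁻¹) with ha
  have haj : ∀ j, 0 ≤ a j := fun j => aj_nonneg d j
  have hmaj : Summable (fun j : ℕ =>
      C * 4 ^ m * (a j ^ m * (1 / 2 : ℝ) ^ j) + C * 2 ^ m * (B + 1) ^ m * (1 / 2 : ℝ) ^ j) := by
    refine Summable.add ?_ ?_
    · exact (summable_key hd).mul_left _
    · exact (summable_geometric_of_lt_one (by norm_num) (by norm_num)).mul_left _
  refine Summable.of_nonneg_of_le (fun j => ?_) (fun j => ?_) hmaj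
  · have := rr_nonneg d j
    positivity
  · have hrr : 2 * rr d j + B = 2 * a j + (B + 1) := by
      rw [rr, ha]; ring
    have h1 : (2 * rr d j + B) ^ m ≤ 2 ^ m * ((2 * a j) ^ m + (B + 1) ^ m) := by
      rw [hrr]
      exact add_pow_le'' (by linarith [haj j]) (by linarith) m
    have h2 : 0 ≤ C * (1 / 2 : ℝ) ^ j := by positivity
    calc C * (2 * rr d j + B) ^ m * (1 / 2 : ℝ) ^ j
        = C * (1 / 2 : ℝ) ^ j * (2 * rr d j + B) ^ m := by ring
      _ ≤ C * (1 / 2 : ℝ) ^ j * (2 ^ m * ((2 * a j) ^ m + (B + 1) ^ m)) :=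
          mul_le_mul_of_nonneg_left h1 h2
      _ = C * 4 ^ m * (a j ^ m * (1 / 2 : ℝ) ^ j) + C * 2 ^ m * (B + 1) ^ m * (1 / 2 : ℝ) ^ j := by
          rw [mul_pow 2 (a j) m, show (4 : ℝ) ^ m = 2 ^ m * 2 ^ m by
            rw [← mul_pow]; norm_num]
          ring
/-- Almost surely, every site eventually shares a `k`-blob with the origin: the induced
clumping rule is connected. -/
theorem statement8 (d : ℕ) (hd : 1 ≤ d)
    (P : Measure (Config d)) (hP : IsBernoulliHalfProduct P) :
    ∀ᵐ γ ∂P, ∀ x : Site d, ∃ k : ℕ, 1 ≤ k ∧ x ∈ clump γ k 0 := by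
  rw [MeasureTheory.ae_all_iff]
  intro x
  set R : ℝ := ‖toR x‖ with hR
  have hR0 : 0 ≤ R := norm_nonneg _
  set A : ℕ → Set (Config d) := fun j =>
    {γ | ∃ c : Site d, IsSeed γ j (c - ss d j) ∧ rr d j - R ≤ ‖toR c‖ ∧ ‖toR c‖ ≤ rr d j + R}
    with hA
  set g : ℕ → ℝ := fun j =>
    (d : ℝ) * (2 * (2 * R) + 4) * (2 * rr d j + (2 * R + 3)) ^ (d - 1) * (1 / 2 : ℝ) ^ j with hg
  have hgnn : ∀ j, 0 ≤ g j := by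
    intro j
    have h0 := rr_nonneg d j
    rw [hg]
    positivity
  have hgsum : Summable g :=
    summable_main hd ((d : ℝ) * (2 * (2 * R) + 4)) (2 * R + 3) (by positivity) (by linarith)
  have hbound : ∀ j : ℕ, P (A j) ≤ ENNReal.ofReal (g j) := by
    intro j
    have hrr := rr_nonneg d j
    obtain ⟨G, hGmem, hGcard⟩ :=
      annulus_card hd (rr d j - R) (rr d j + R) (by linarith) (by linarith)
    have hsub : A j ⊆ ⋃ c ∈ G, {γ : Config d | IsSeed γ j (c - ss d j)} := by
      intro γ hγ
      obtain ⟨c, hc1, hc2, hc3⟩ := hγ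
      exact Set.mem_biUnion (hGmem c hc2 hc3) hc1
    have h1 : P (A j) ≤ ∑ c ∈ G, P {γ : Config d | IsSeed γ j (c - ss d j)} :=
      (measure_mono hsub).trans (measure_biUnion_finset_le G _)
    have h2 : ∑ c ∈ G, P {γ : Config d | IsSeed γ j (c - ss d j)}
        ≤ (G.card : ℝ≥0∞) * (1 / 2 : ℝ≥0∞) ^ j := by
      calc ∑ c ∈ G, P {γ : Config d | IsSeed γ j (c - ss d j)}
          ≤ ∑ _c ∈ G, (1 / 2 : ℝ≥0∞) ^ j :=
            Finset.sum_le_sum (fun c _ => measure_isSeed_le hd hP j _)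
        _ = (G.card : ℝ≥0∞) * (1 / 2 : ℝ≥0∞) ^ j := by
            rw [Finset.sum_const, nsmul_eq_mul]
    have h3 : (G.card : ℝ≥0∞) * (1 / 2 : ℝ≥0∞) ^ j
        = ENNReal.ofReal ((G.card : ℝ) * (1 / 2 : ℝ) ^ j) := by
      have hhalf : (1 / 2 : ℝ≥0∞) = ENNReal.ofReal (1 / 2 : ℝ) := by
        rw [ENNReal.ofReal_div_of_pos (by norm_num), ENNReal.ofReal_one, ENNReal.ofReal_ofNat]
      rw [ENNReal.ofReal_mul (Nat.cast_nonneg _), ENNReal.ofReal_natCast,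
        ENNReal.ofReal_pow (by norm_num : (0 : ℝ) ≤ 1 / 2), ← hhalf]
    have h4 : ((G.card : ℝ) * (1 / 2 : ℝ) ^ j) ≤ g j := by
      have e1 : rr d j + R - (rr d j - R) = 2 * R := by ring
      have e2 : 2 * (rr d j + R) + 3 = 2 * rr d j + (2 * R + 3) := by ring
      rw [e1, e2] at hGcard
      have hp : (0 : ℝ) ≤ (1 / 2 : ℝ) ^ j := by positivity
      calc (G.card : ℝ) * (1 / 2 : ℝ) ^ j
          ≤ ((d : ℝ) * (2 * (2 * R) + 4) * (2 * rr d j + (2 * R + 3)) ^ (d - 1))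
              * (1 / 2 : ℝ) ^ j := mul_le_mul_of_nonneg_right hGcard hp
        _ = g j := by rw [hg]
    exact ((h1.trans (h2.trans_eq h3))).trans (ENNReal.ofReal_le_ofReal h4)
  have htsum : ∑' j, P (A j) ≠ ⊤ := by
    have h1 : ∑' j, P (A j) ≤ ∑' j, ENNReal.ofReal (g j) := ENNReal.tsum_le_tsum hbound
    have h2 : ∑' j, ENNReal.ofReal (g j) = ENNReal.ofReal (∑' j, g j) :=
      (ENNReal.ofReal_tsum_of_nonneg hgnn hgsum).symm
    rw [h2] at h1
    exact ne_top_of_le_ne_top ENNReal.ofReal_ne_top h1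
  have hae := MeasureTheory.ae_eventually_notMem htsum
  filter_upwards [hae] with γ hγ
  obtain ⟨N, hN⟩ := Filter.eventually_atTop.mp hγ
  refine ⟨max N 1, le_max_right N 1, ?_⟩
  show toR x ∈ blob γ (max N 1) (toR 0)
  have htoR0 : toR (0 : Site d) = 0 := funext fun i => by simp [toR]
  set k := max N 1 with hk
  have hseg : segment ℝ (toR (0 : Site d)) (toR x)
      ⊆ (⋃ j ∈ {j : ℕ | k < j}, cutters γ j)ᶜ := by
    intro p hp
    have hpnorm : ‖p‖ ≤ R := by
      obtain ⟨a, b, ha, hb, hab, rfl⟩ := hp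
      have hb1 : b ≤ 1 := by linarith
      calc ‖a • toR (0 : Site d) + b • toR x‖
          ≤ ‖a • toR (0 : Site d)‖ + ‖b • toR x‖ := norm_add_le _ _
        _ = |a| * ‖toR (0 : Site d)‖ + |b| * ‖toR x‖ := by
            rw [norm_smul, norm_smul, Real.norm_eq_abs, Real.norm_eq_abs]
        _ = |b| * R := by rw [htoR0, norm_zero, hR]; ring
        _ ≤ R := by rw [abs_of_nonneg hb]; nlinarith
    rw [Set.mem_compl_iff]
    intro hmem
    rw [Set.mem_iUnion₂] at hmem
    obtain ⟨j, hj, hpc⟩ := hmem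
    simp only [cutters, Set.mem_iUnion₂, Set.mem_iUnion] at hpc
    obtain ⟨c, hcseed, hpc2⟩ := hpc
    have hpc3 : ‖p - toR c‖ = rr d j := hpc2
    have hub : ‖toR c‖ ≤ rr d j + R := by
      have h5 : ‖toR c‖ - ‖p‖ ≤ ‖toR c - p‖ := norm_sub_norm_le _ _
      rw [norm_sub_rev, hpc3] at h5
      linarith
    have hlb : rr d j - R ≤ ‖toR c‖ := by
      have h5 : ‖p - toR c‖ ≤ ‖p‖ + ‖toR c‖ := norm_sub_le _ _
      rw [hpc3] at h5
      linarith
    have hmemA : γ ∈ A j := ⟨c, hcseed, hlb, hub⟩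
    have hNj : N ≤ j := le_trans (le_max_left N 1) (le_of_lt hj)
    exact hN j hNj hmemA
  have hcc := (convex_segment (toR (0 : Site d)) (toR x)).isPreconnected
  exact hcc.subset_connectedComponentIn (left_mem_segment ℝ _ _) hseg
    (right_mem_segment ℝ _ _)
end
end

section
/- Let p ∈ [0,1] with p ≠ 1/2 and let ℙ_p be the product measure on X = {0,1}^{ℤ^d} under which the coordinates are i.i.d. Bernoulli(p). Then there is no translation-equivariant matching rule with respect to ℙ_p; that is, there is no measurable Φ : X × ℤ^d → ℤ^d such that Φ(γ, ·) is a matching on γ for ℙ_p-a.e. γ and Φ(θ^z γ, θ^z x) = θ^z Φ(γ, x) for all z, x and ℙ_p-a.e. γ. -/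
open MeasureTheory ENNReal

noncomputable section

/-- `P` is the product measure with i.i.d. Bernoulli(`p`) coordinates. -/
def IsBernoulliProduct {d : ℕ} (P : Measure (Config d)) (p : ℝ) : Prop :=
  IsProbabilityMeasure P ∧
    ∀ (s : Finset (Site d)) (f : Site d → Bool),
      P {γ | ∀ x ∈ s, γ x = f x}
        = ∏ x ∈ s, (if f x then ENNReal.ofReal p else ENNReal.ofReal (1 - p))

namespace MTaux

variable {d : ℕ}

lemma measurable_shiftCfg (z : Site d) : Measurable (shiftCfg z) :=
  measurable_pi_lambda _ fun x => measurable_pi_apply (x - z)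

/-- Cylinder sets. -/
def Cyl (d : ℕ) : Set (Set (Config d)) :=
  {A | ∃ (s : Finset (Site d)) (f : Site d → Bool), A = {γ | ∀ x ∈ s, γ x = f x}}

lemma cyl_measurableSet {A : Set (Config d)} (hA : A ∈ Cyl d) : MeasurableSet A := by
  obtain ⟨s, f, rfl⟩ := hA
  have : {γ : Config d | ∀ x ∈ s, γ x = f x} = ⋂ x ∈ (s : Set (Site d)), {γ | γ x = f x} := by
    ext γ; simp
  rw [this]
  refine MeasurableSet.biInter s.countable_toSet fun x _ => ?_
  show MeasurableSet ((fun γ : Config d => γ x) ⁻¹' {f x})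
  exact (measurable_pi_apply x) (measurableSet_singleton (f x))

lemma generate_cyl : (inferInstance : MeasurableSpace (Config d))
    = MeasurableSpace.generateFrom (Cyl d) := by
  refine le_antisymm ?_ (MeasurableSpace.generateFrom_le fun A hA => cyl_measurableSet hA)
  have hb : ∀ (x : Site d) (b : Bool),
      MeasurableSet[MeasurableSpace.generateFrom (Cyl d)] {γ : Config d | γ x = b} := by
    intro x b
    have : {γ : Config d | γ x = b} = {γ' | ∀ y ∈ ({x} : Finset (Site d)), γ' y = b} := by
      ext γ'; simp
    rw [this]
    exact MeasurableSpace.measurableSet_generateFrom ⟨{x}, fun _ => b, rfl⟩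
  have h2 : (MeasurableSpace.pi : MeasurableSpace (Config d))
      ≤ MeasurableSpace.generateFrom (Cyl d) := by
    refine iSup_le fun x => ?_
    rw [MeasurableSpace.le_def]
    rintro S ⟨t, -, rfl⟩
    have : (fun γ : Config d => γ x) ⁻¹' t = ⋃ b ∈ t, {γ : Config d | γ x = b} := by
      ext γ; simp
    rw [this]
    exact MeasurableSet.biUnion t.to_countable fun b _ => hb x b
  exact h2

lemma isPiSystem_cyl : IsPiSystem (Cyl d) := by
  rintro A ⟨s, f, rfl⟩ B ⟨t, g, rfl⟩ hne
  classical
  refine ⟨s ∪ t, fun x => if x ∈ s then f x else g x, ?_⟩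
  obtain ⟨γ₀, hγ₀⟩ := hne
  ext γ
  simp only [Set.mem_inter_iff, Set.mem_setOf_eq, Finset.mem_union]
  constructor
  · rintro ⟨h1, h2⟩ x hx
    by_cases hs : x ∈ s
    · simp [hs, h1 x hs]
    · simp [hs, h2 x (hx.resolve_left hs)]
  · intro h
    constructor
    · intro x hx
      have := h x (Or.inl hx); simpa [hx] using this
    · intro x hx
      by_cases hs : x ∈ s
      · have hfg : f x = g x := by
          have := (hγ₀.1 x hs).symm.trans (hγ₀.2 x hx)
          exact this
        have := h x (Or.inl hs); simp only [hs, if_true] at this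
        exact this.trans hfg
      · have := h x (Or.inr hx); simpa [hs] using this

lemma map_shift {P : Measure (Config d)} {p : ℝ} (hP : IsBernoulliProduct P p)
    (z : Site d) : P.map (shiftCfg z) = P := by
  haveI := hP.1
  haveI : IsProbabilityMeasure (P.map (shiftCfg z)) :=
    Measure.isProbabilityMeasure_map (measurable_shiftCfg z).aemeasurable
  refine MeasureTheory.ext_of_generate_finite (Cyl d) generate_cyl isPiSystem_cyl ?_ (by simp)
  rintro A ⟨s, f, rfl⟩
  rw [Measure.map_apply (measurable_shiftCfg z) (cyl_measurableSet ⟨s, f, rfl⟩)]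
  have hpre : shiftCfg z ⁻¹' {γ : Config d | ∀ x ∈ s, γ x = f x}
      = {γ : Config d | ∀ y ∈ s.map (Equiv.subRight z).toEmbedding, γ y = f (y + z)} := by
    ext γ
    simp only [Set.mem_preimage, Set.mem_setOf_eq, Finset.mem_map, Equiv.coe_toEmbedding,
      Equiv.subRight_apply, shiftCfg]
    constructor
    · rintro h y ⟨x, hx, rfl⟩
      simpa using h x hx
    · intro h x hx
      have := h (x - z) ⟨x, hx, rfl⟩
      simpa using this
  rw [hpre, hP.2, hP.2]
  rw [Finset.prod_map]
  simp

end MTaux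

/-- If `p ≠ 1/2` there is no translation-equivariant matching rule with respect to the
Bernoulli(`p`) product measure. -/
theorem statement11 (d : ℕ) (hd : 1 ≤ d) (p : ℝ) (hp0 : 0 ≤ p) (hp1 : p ≤ 1)
    (hp : p ≠ 1 / 2)
    (P : Measure (Config d)) (hP : IsBernoulliProduct P p) :
    ¬ ∃ Φ : Config d → Site d → Site d,
        IsMatchingRule P Φ ∧ IsEquivariant P Φ := by
  rintro ⟨Φ, ⟨hΦm, hΦae⟩, hE⟩
  haveI := hP.1
  classical
  -- measurable full-measure set on which the matching property holds
  obtain ⟨N, hNsub, hNm, hN0⟩ :=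
    exists_measurable_superset_of_null (ae_iff.mp hΦae)
  set G : Set (Config d) := Nᶜ with hG
  have hGm : MeasurableSet G := hNm.compl
  have hGc : P Gᶜ = 0 := by rwa [hG, compl_compl]
  have hGmatch : ∀ γ ∈ G, IsMatching γ (Φ γ) := by
    intro γ hγ
    by_contra h
    exact hγ (hNsub h)
  -- the transport sets
  set A : Site d → Set (Config d) := fun y => {γ | γ 0 = true ∧ Φ γ 0 = y} with hA
  set B : Site d → Set (Config d) := fun x => {γ | γ x = true ∧ Φ γ x = 0} with hB
  have hAm : ∀ y, MeasurableSet (A y) := by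
    intro y
    have : A y = (fun γ : Config d => γ 0) ⁻¹' {true} ∩ (fun γ => Φ γ 0) ⁻¹' {y} := by
      ext γ; simp [hA]
    rw [this]
    exact ((measurable_pi_apply 0) (measurableSet_singleton true)).inter
      ((hΦm 0) (measurableSet_singleton y))
  have hBm : ∀ x, MeasurableSet (B x) := by
    intro x
    have : B x = (fun γ : Config d => γ x) ⁻¹' {true} ∩ (fun γ => Φ γ x) ⁻¹' {0} := by
      ext γ; simp [hB]
    rw [this]
    exact ((measurable_pi_apply x) (measurableSet_singleton true)).inter
      ((hΦm x) (measurableSet_singleton (0 : Site d)))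
  -- Claim 1 : ∑ₓ P (A y) = P {γ0 = true}
  have claim1 : ∑' y : Site d, P (A y) = P {γ | γ 0 = true} := by
    rw [← measure_iUnion ?_ hAm]
    · congr 1
      ext γ
      simp only [Set.mem_iUnion, hA, Set.mem_setOf_eq]
      exact ⟨fun ⟨y, h, _⟩ => h, fun h => ⟨Φ γ 0, h, rfl⟩⟩
    · intro y y' hyy'
      refine Set.disjoint_left.mpr fun γ hγ hγ' => hyy' ?_
      exact hγ.2.symm.trans hγ'.2
  -- Claim 2 : P (B x) = P (A (-x))
  have claim2 : ∀ x : Site d, P (B x) = P (A (-x)) := by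
    intro x
    have hmap := MTaux.map_shift hP x
    have : P (B x) = P (shiftCfg x ⁻¹' B x) := by
      conv_lhs => rw [← hmap]
      rw [Measure.map_apply (MTaux.measurable_shiftCfg x) (hBm x)]
    rw [this]
    refine measure_congr ?_
    have heq := hE x 0
    filter_upwards [heq] with γ hγ
    have h0 : Φ (shiftCfg x γ) x = Φ γ 0 + x := by simpa using hγ
    have hx0 : shiftCfg x γ x = γ 0 := by simp [shiftCfg]
    show (γ ∈ shiftCfg x ⁻¹' B x) = (γ ∈ A (-x))
    simp only [Set.mem_preimage, hB, hA, Set.mem_setOf_eq, hx0, h0, eq_iff_iff]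
    constructor
    · rintro ⟨h1, h2⟩
      exact ⟨h1, by linear_combination (norm := module) h2⟩
    · rintro ⟨h1, h2⟩
      exact ⟨h1, by rw [h2]; abel⟩
  -- Claim 3 : ∑ₓ P (B x) = P {γ0 = false}
  have claim3 : ∑' x : Site d, P (B x) = P {γ | γ 0 = false} := by
    have h1 : ∀ x, P (B x) = P (B x ∩ G) := fun x => (measure_inter_conull hGc).symm
    have h2 : (⋃ x, B x ∩ G) = {γ | γ 0 = false} ∩ G := by
      ext γ
      simp only [Set.mem_iUnion, Set.mem_inter_iff, hB, Set.mem_setOf_eq]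
      constructor
      · rintro ⟨x, ⟨hx1, hx2⟩, hγG⟩
        obtain ⟨_, _, hflip⟩ := hGmatch γ hγG
        refine ⟨?_, hγG⟩
        have := hflip x
        rw [hx2, hx1] at this
        simpa using this
      · rintro ⟨h0, hγG⟩
        obtain ⟨_, hinv, hflip⟩ := hGmatch γ hγG
        refine ⟨Φ γ 0, ⟨?_, hinv 0⟩, hγG⟩
        have := hflip 0
        rw [h0] at this
        simpa using this
    calc ∑' x : Site d, P (B x) = ∑' x : Site d, P (B x ∩ G) := by
          exact tsum_congr h1
      _ = P (⋃ x, B x ∩ G) := by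
          rw [measure_iUnion ?_ fun x => (hBm x).inter hGm]
          intro x x' hxx'
          refine Set.disjoint_left.mpr fun γ hγ hγ' => hxx' ?_
          obtain ⟨hbij, _, _⟩ := hGmatch γ hγ.2
          exact hbij.1 (hγ.1.2.trans hγ'.1.2.symm)
      _ = P ({γ | γ 0 = false} ∩ G) := by rw [h2]
      _ = P {γ | γ 0 = false} := measure_inter_conull hGc
  -- reindex
  have hre : ∑' x : Site d, P (A (-x)) = ∑' y : Site d, P (A y) :=
    (Equiv.neg (Site d)).tsum_eq fun y => P (A y)
  have key : P {γ | γ 0 = false} = P {γ | γ 0 = true} := by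
    rw [← claim3, ← claim1, ← hre]
    exact tsum_congr claim2
  -- evaluate via the Bernoulli formula
  have htrue : P {γ | γ 0 = true} = ENNReal.ofReal p := by
    have := hP.2 {0} (fun _ => true)
    simpa using this
  have hfalse : P {γ | γ 0 = false} = ENNReal.ofReal (1 - p) := by
    have := hP.2 {0} (fun _ => false)
    simpa using this
  rw [htrue, hfalse] at key
  rw [ENNReal.ofReal_eq_ofReal_iff (by linarith) hp0] at key
  exact hp (by linarith)

end
end
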